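/- arXiv:1603.02863 — 6 statements merged into one kernel-verified Lean document; each statement's English description precedes it below -/
import Mathlib

section
/- Let n ≥ 1, c ∈ ℝⁿ and ρ > 0, and let N = #(ℤⁿ ∩ B_{c,n}(ρ)) be the number of integer points in the ball. Then vol(B_{c,n}(ρ)) · (max{1 − √n/(2ρ), 0})ⁿ ≤ N ≤ vol(B_{c,n}(ρ)) · (1 + √n/(2ρ))ⁿ. -/
/-!
Each integer point `x` owns the half-open unit cube `round⁻¹' {x}` (coordinatewise rounding), of
volume `1` and contained in the ball of radius `√n / 2` about `x`. Hence the cubes of the integer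
points in `B(c, ρ)` are disjoint, cover `B(c, ρ - √n / 2)` and lie inside `B(c, ρ + √n / 2)`;
comparing volumes and using `vol B(c, r) = rⁿ · vol B(c, 1)` gives both bounds.
-/

open MeasureTheory Metric Set

section EuclideanBall

variable {ι : Type*} [Fintype ι]

def euclideanClosedBall (c : ι → ℝ) (r : ℝ) : Set (ι → ℝ) :=
  {y | √(∑ i, (y i - c i) ^ 2) ≤ r}

lemma sqrt_sum_sq_sub_eq_dist (a b : ι → ℝ) :
    √(∑ i, (a i - b i) ^ 2) = dist (WithLp.toLp 2 a) (WithLp.toLp 2 b) := by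
  simp [EuclideanSpace.dist_eq, Real.dist_eq, sq_abs]

lemma mem_euclideanClosedBall {c y : ι → ℝ} {r : ℝ} :
    y ∈ euclideanClosedBall c r ↔ dist (WithLp.toLp 2 y) (WithLp.toLp 2 c) ≤ r := by
  rw [euclideanClosedBall, mem_ofPred_eq, sqrt_sum_sq_sub_eq_dist]

lemma volume_euclideanClosedBall (c : ι → ℝ) (r : ℝ) :
    volume (euclideanClosedBall c r) = volume (closedBall (WithLp.toLp 2 c) r) := by
  rw [← (PiLp.volume_preserving_toLp ι).measure_preimage measurableSet_closedBall.nullMeasurableSet]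
  congr 1
  ext y
  exact mem_euclideanClosedBall

lemma volume_euclideanClosedBall_ne_top (c : ι → ℝ) (r : ℝ) :
    volume (euclideanClosedBall c r) ≠ ⊤ := by
  rw [volume_euclideanClosedBall]
  exact measure_closedBall_lt_top.ne

lemma toReal_volume_euclideanClosedBall [Nonempty ι] (c : ι → ℝ) (r : ℝ) :
    (volume (euclideanClosedBall c r)).toReal =
      max r 0 ^ Fintype.card ι * (volume (euclideanClosedBall c 1)).toReal := by
  rw [volume_euclideanClosedBall, volume_euclideanClosedBall, EuclideanSpace.volume_closedBall,
    EuclideanSpace.volume_closedBall]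
  simp only [ENNReal.toReal_mul, ENNReal.toReal_pow, ENNReal.toReal_ofReal', max_eq_left zero_le_one,
    one_pow, one_mul]

end EuclideanBall

section LatticePoints

variable {ι : Type*}

lemma preimage_round_comp_singleton (x : ι → ℤ) :
    (fun y : ι → ℝ => round ∘ y) ⁻¹' {x} =
      univ.pi fun i => Ico ((x i : ℝ) - 1 / 2) (x i + 1 / 2) := by
  ext y
  simp [funext_iff, round_eq_iff]

variable [Fintype ι]

lemma volume_preimage_round_comp (s : Finset (ι → ℤ)) :
    volume ((fun y : ι → ℝ => round ∘ y) ⁻¹' s) = s.card := by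
  rw [← sum_measure_preimage_singleton s fun x _ => by
    rw [preimage_round_comp_singleton]; exact MeasurableSet.univ_pi fun _ => measurableSet_Ico]
  norm_num [preimage_round_comp_singleton, volume_pi_pi, Real.volume_Ico]

lemma dist_toLp_round_le (y : ι → ℝ) :
    dist (WithLp.toLp 2 y) (WithLp.toLp 2 fun i => (round (y i) : ℝ)) ≤
      √(Fintype.card ι) / 2 := by
  have hterm : ∀ i, (y i - round (y i)) ^ 2 ≤ (1 / 2) ^ 2 := fun i => by
    rw [← sq_abs]
    exact pow_le_pow_left₀ (abs_nonneg _) (abs_sub_round _) 2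
  rw [← sqrt_sum_sq_sub_eq_dist]
  calc √(∑ i, (y i - round (y i)) ^ 2) ≤ √(∑ _i : ι, (1 / 2 : ℝ) ^ 2) :=
        Real.sqrt_le_sqrt (Finset.sum_le_sum fun i _ => hterm i)
    _ = √(Fintype.card ι) / 2 := by
        rw [Finset.sum_const, Finset.card_univ, nsmul_eq_mul, Real.sqrt_mul (Nat.cast_nonneg _),
          Real.sqrt_sq (by norm_num)]
        ring

def latticePoints (c : ι → ℝ) (r : ℝ) : Set (ι → ℤ) :=
  {x | (fun i => (x i : ℝ)) ∈ euclideanClosedBall c r}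

lemma finite_latticePoints (c : ι → ℝ) (r : ℝ) : (latticePoints c r).Finite := by
  classical
  refine (finite_Icc (fun i => ⌈c i - r⌉) (fun i => ⌊c i + r⌋)).subset fun x hx => ?_
  have hcoord : ∀ i, |(x i : ℝ) - c i| ≤ r := fun i => by
    rw [← Real.dist_eq]
    exact (PiLp.dist_apply_le _ _ i).trans (mem_euclideanClosedBall.1 hx)
  exact ⟨fun i => Int.ceil_le.2 (by linarith [(abs_le.1 (hcoord i)).1]),
    fun i => Int.le_floor.2 (by linarith [(abs_le.1 (hcoord i)).2])⟩

lemma ncard_latticePoints_eq_volume (c : ι → ℝ) (r : ℝ) :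
    ((latticePoints c r).ncard : ENNReal) =
      volume ((fun y : ι → ℝ => round ∘ y) ⁻¹' latticePoints c r) := by
  have hfin := finite_latticePoints c r
  rw [Set.ncard_eq_toFinset_card _ hfin, ← volume_preimage_round_comp, hfin.coe_toFinset]

lemma preimage_round_latticePoints_subset (c : ι → ℝ) (r : ℝ) :
    (fun y : ι → ℝ => round ∘ y) ⁻¹' latticePoints c r ⊆
      euclideanClosedBall c (r + √(Fintype.card ι) / 2) := by
  intro y hy
  simp only [mem_preimage, latticePoints, mem_ofPred_eq, Function.comp_apply,
    mem_euclideanClosedBall] at hy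
  rw [mem_euclideanClosedBall]
  linarith [dist_triangle (WithLp.toLp 2 y) (WithLp.toLp 2 fun i => (round (y i) : ℝ))
    (WithLp.toLp 2 c), dist_toLp_round_le y]

lemma euclideanClosedBall_subset_preimage_round (c : ι → ℝ) (r : ℝ) :
    euclideanClosedBall c (r - √(Fintype.card ι) / 2) ⊆
      (fun y : ι → ℝ => round ∘ y) ⁻¹' latticePoints c r := by
  intro y hy
  rw [mem_euclideanClosedBall] at hy
  simp only [mem_preimage, latticePoints, mem_ofPred_eq, Function.comp_apply,
    mem_euclideanClosedBall]
  linarith [dist_triangle_left (WithLp.toLp 2 fun i => (round (y i) : ℝ)) (WithLp.toLp 2 c)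
    (WithLp.toLp 2 y), dist_toLp_round_le y]

theorem toReal_volume_le_ncard_latticePoints (c : ι → ℝ) (r : ℝ) :
    (volume (euclideanClosedBall c (r - √(Fintype.card ι) / 2))).toReal ≤
      (latticePoints c r).ncard := by
  have h := measure_mono (μ := volume) (euclideanClosedBall_subset_preimage_round c r)
  rw [← ncard_latticePoints_eq_volume] at h
  simpa using ENNReal.toReal_mono (ENNReal.natCast_ne_top _) h

theorem ncard_latticePoints_le_toReal_volume (c : ι → ℝ) (r : ℝ) :
    ((latticePoints c r).ncard : ℝ) ≤
      (volume (euclideanClosedBall c (r + √(Fintype.card ι) / 2))).toReal := by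
  have h := measure_mono (μ := volume) (preimage_round_latticePoints_subset c r)
  rw [← ncard_latticePoints_eq_volume] at h
  simpa using ENNReal.toReal_mono (volume_euclideanClosedBall_ne_top _ _) h

end LatticePoints

/-- **Integer points inside a sphere.**  For `n ≥ 1`, `c ∈ ℝⁿ` and `ρ > 0`, the number `N` of
integer points in the closed ball `B_{c,n}(ρ)` satisfies
`vol(B_{c,n}(ρ)) · (max{1 − √n/(2ρ), 0})ⁿ ≤ N ≤ vol(B_{c,n}(ρ)) · (1 + √n/(2ρ))ⁿ`. -/
theorem integer_points_in_sphere (n : ℕ) (hn : 1 ≤ n) (c : Fin n → ℝ) (ρ : ℝ) (hρ : 0 < ρ) :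
    (volume {y : Fin n → ℝ | Real.sqrt (∑ i, (y i - c i) ^ 2) ≤ ρ}).toReal *
        (max (1 - Real.sqrt n / (2 * ρ)) 0) ^ n
      ≤ (Set.ncard {x : Fin n → ℤ | Real.sqrt (∑ i, ((x i : ℝ) - c i) ^ 2) ≤ ρ} : ℝ) ∧
    (Set.ncard {x : Fin n → ℤ | Real.sqrt (∑ i, ((x i : ℝ) - c i) ^ 2) ≤ ρ} : ℝ)
      ≤ (volume {y : Fin n → ℝ | Real.sqrt (∑ i, (y i - c i) ^ 2) ≤ ρ}).toReal *
        (1 + Real.sqrt n / (2 * ρ)) ^ n := by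
  have : Nonempty (Fin n) := ⟨⟨0, hn⟩⟩
  have hlow := toReal_volume_le_ncard_latticePoints c ρ
  have hup := ncard_latticePoints_le_toReal_volume c ρ
  change (volume (euclideanClosedBall c ρ)).toReal * _ ≤ ((latticePoints c ρ).ncard : ℝ) ∧
    ((latticePoints c ρ).ncard : ℝ) ≤ (volume (euclideanClosedBall c ρ)).toReal * _
  rw [toReal_volume_euclideanClosedBall c ρ, max_eq_left hρ.le]
  rw [toReal_volume_euclideanClosedBall] at hlow hup
  simp only [Fintype.card_fin] at hlow hup ⊢
  have hminus : ρ * max (1 - √n / (2 * ρ)) 0 = max (ρ - √n / 2) 0 := by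
    rw [mul_max_of_nonneg _ _ hρ.le, mul_zero]
    field_simp
  have hplus : ρ * (1 + √n / (2 * ρ)) = max (ρ + √n / 2) 0 := by
    rw [max_eq_left (by positivity)]
    field_simp
  constructor
  · calc _ = max (ρ - √n / 2) 0 ^ n * (volume (euclideanClosedBall c 1)).toReal := by
          rw [← hminus, mul_pow]; ring
      _ ≤ _ := hlow
  · calc _ ≤ max (ρ + √n / 2) 0 ^ n * (volume (euclideanClosedBall c 1)).toReal := hup
      _ = _ := by rw [← hplus, mul_pow]; ring
end

section
/- Let p be a prime, n ≥ 1, c ∈ ℝⁿ, ρ > 0, let B = B_{c,n}(ρ), let x ∈ B ∩ ℤⁿ, and let μ ∈ ℤ. Then the number of points z ∈ B ∩ ℤⁿ with z ≡ μx (mod p) (coordinatewise congruence) is at most 1 + (4ρ²/p²)·(8nρ²/p²)^{4ρ²/p²}. -/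
/-!
Fix a point `z₀` of the set. Any other point is `z₀ + p • w` with `w ∈ ℤⁿ`, and since both lie
in a ball of radius `ρ`, `∑ wᵢ² ≤ 4ρ²/p² =: t`, so `∑ |wᵢ| ≤ ⌊t⌋ =: K` (as `|k| ≤ k²` on `ℤ`).
An integer vector of `ℓ¹`-norm at most `K` is a sum of `K` vectors from `{0, ±e₁, …, ±eₙ}`, so
there are at most `(2n + 1)^K` such `w`, and `(2n + 1)^K ≤ 1 + t (2nt)^t`.
-/

open Finset
open scoped Pointwise

def unitSteps (n : ℕ) : Finset (Fin n → ℤ) :=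
  insert 0 ((univ ×ˢ {1, -1}).image fun is : Fin n × ℤ => (Pi.single is.1 is.2 : Fin n → ℤ))

lemma card_unitSteps_le (n : ℕ) : #(unitSteps n) ≤ 2 * n + 1 :=
  calc #(unitSteps n)
      ≤ #((univ ×ˢ {1, -1}).image fun is : Fin n × ℤ => (Pi.single is.1 is.2 : Fin n → ℤ)) + 1 :=
        card_insert_le _ _
    _ ≤ #((univ : Finset (Fin n)) ×ˢ ({1, -1} : Finset ℤ)) + 1 := by gcongr; exact card_image_le
    _ ≤ 2 * n + 1 := by
        rw [card_product, card_univ, Fintype.card_fin, mul_comm]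
        gcongr
        exact card_le_two

lemma exists_sub_mem_unitSteps {n K : ℕ} {w : Fin n → ℤ} (hw : ∑ i, (w i).natAbs ≤ K + 1) :
    ∃ u ∈ unitSteps n, ∑ i, ((w - u) i).natAbs ≤ K := by
  by_cases hK : ∑ i, (w i).natAbs ≤ K
  · exact ⟨0, mem_insert_self _ _, by simpa using hK⟩
  obtain ⟨i, hi⟩ : ∃ i, w i ≠ 0 := by
    by_contra! h
    simp only [h, Int.natAbs_zero, sum_const_zero] at hK
    omega
  set s : ℤ := if 0 < w i then 1 else -1
  have hs : (i, s) ∈ univ ×ˢ ({1, -1} : Finset ℤ) := by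
    by_cases h : 0 < w i <;> simp [s, h]
  set u : Fin n → ℤ := Pi.single i s
  refine ⟨u, mem_insert_of_mem (mem_image.2 ⟨(i, s), hs, rfl⟩), ?_⟩
  have hdrop : ((w - u) i).natAbs + 1 = (w i).natAbs := by
    simp only [Pi.sub_apply, u, Pi.single_eq_same, s]
    split_ifs <;> omega
  have hrest : ∑ j ∈ {i}ᶜ, ((w - u) j).natAbs = ∑ j ∈ {i}ᶜ, (w j).natAbs :=
    sum_congr rfl fun j hj => by simp [u, Pi.single_eq_of_ne (mem_compl.1 hj ∘ mem_singleton.2)]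
  rw [Fintype.sum_eq_add_sum_compl i, hrest]
  rw [Fintype.sum_eq_add_sum_compl i] at hw hK
  omega

lemma mem_nsmul_unitSteps {n : ℕ} : ∀ {K : ℕ} {w : Fin n → ℤ}, ∑ i, (w i).natAbs ≤ K →
    w ∈ K • unitSteps n
  | 0, w, hw => by
    have : w = 0 := funext fun i => by
      simpa using (single_le_sum (fun j _ => Nat.zero_le _) (mem_univ i)).trans hw
    simp [this]
  | K + 1, w, hw => by
    obtain ⟨u, hu, hwu⟩ := exists_sub_mem_unitSteps hw
    rw [succ_nsmul]
    exact mem_add.2 ⟨w - u, mem_nsmul_unitSteps hwu, u, hu, sub_add_cancel w u⟩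

lemma setOf_sum_natAbs_le_subset_nsmul (n K : ℕ) :
    {w : Fin n → ℤ | ∑ i, (w i).natAbs ≤ K} ⊆ ↑(K • unitSteps n) :=
  fun _ hw => mem_nsmul_unitSteps hw

lemma finite_setOf_sum_natAbs_le (n K : ℕ) :
    {w : Fin n → ℤ | ∑ i, (w i).natAbs ≤ K}.Finite :=
  (K • unitSteps n).finite_toSet.subset (setOf_sum_natAbs_le_subset_nsmul n K)

lemma ncard_setOf_sum_natAbs_le (n K : ℕ) :
    {w : Fin n → ℤ | ∑ i, (w i).natAbs ≤ K}.ncard ≤ (2 * n + 1) ^ K :=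
  calc {w : Fin n → ℤ | ∑ i, (w i).natAbs ≤ K}.ncard
      ≤ #(K • unitSteps n) := by
        rw [← Set.ncard_coe_finset]
        exact Set.ncard_le_ncard (setOf_sum_natAbs_le_subset_nsmul n K) (finite_toSet _)
    _ ≤ #(unitSteps n) ^ K := card_nsmul_le
    _ ≤ (2 * n + 1) ^ K := Nat.pow_le_pow_left (card_unitSteps_le n) K

lemma pow_le_one_add_mul_pow {n K : ℕ} (hn : 1 ≤ n) :
    (2 * n + 1) ^ K ≤ 1 + K * (2 * n * K) ^ K := by
  obtain _ | _ | K := K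
  · simp
  · simp [add_comm]
  · calc (2 * n + 1) ^ (K + 2) ≤ (2 * n * (K + 2)) ^ (K + 2) := by gcongr; nlinarith
      _ ≤ (K + 2) * (2 * n * (K + 2)) ^ (K + 2) := Nat.le_mul_of_pos_left _ (by omega)
      _ ≤ 1 + (K + 2) * (2 * n * (K + 2)) ^ (K + 2) := by omega

lemma pow_floor_le_one_add_mul_rpow {n : ℕ} (hn : 1 ≤ n) {t : ℝ} (ht : 0 ≤ t) :
    ((2 * n + 1 : ℕ) : ℝ) ^ ⌊t⌋₊ ≤ 1 + t * (2 * n * t) ^ t := by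
  set K := ⌊t⌋₊
  have hKt : (K : ℝ) ≤ t := Nat.floor_le ht
  obtain hK | hK := K.eq_zero_or_pos
  · rw [hK, pow_zero]
    have : 0 ≤ t * (2 * n * t) ^ t := by positivity
    linarith
  have ht1 : 1 ≤ t := le_trans (by exact_mod_cast hK) hKt
  have hbase : 1 ≤ 2 * (n : ℝ) * t := by
    have : (1 : ℝ) ≤ n := by exact_mod_cast hn
    nlinarith
  calc ((2 * n + 1 : ℕ) : ℝ) ^ K ≤ 1 + K * (2 * n * K) ^ K := by
        exact_mod_cast pow_le_one_add_mul_pow hn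
    _ = 1 + K * (2 * n * K) ^ (K : ℝ) := by rw [Real.rpow_natCast]
    _ ≤ 1 + t * (2 * n * t) ^ t := by
        gcongr (1 + ?_ * ?_)
        calc (2 * n * K : ℝ) ^ (K : ℝ) ≤ (2 * n * t) ^ (K : ℝ) := by gcongr
          _ ≤ (2 * n * t) ^ t := Real.rpow_le_rpow_of_exponent_le hbase hKt

lemma sum_sq_sub_le_of_sqrt_le {ι : Type*} [Fintype ι] {u v c : ι → ℝ} {ρ : ℝ}
    (hu : √(∑ i, (u i - c i) ^ 2) ≤ ρ) (hv : √(∑ i, (v i - c i) ^ 2) ≤ ρ) :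
    ∑ i, (u i - v i) ^ 2 ≤ 4 * ρ ^ 2 := by
  have hdist (a b : ι → ℝ) :
      √(∑ i, (a i - b i) ^ 2) = dist (WithLp.toLp 2 a) (WithLp.toLp 2 b) := by
    simp [EuclideanSpace.dist_eq, Real.dist_eq, sq_abs]
  rw [hdist] at hu hv
  have h := (dist_triangle_right (WithLp.toLp 2 u) (WithLp.toLp 2 v) (WithLp.toLp 2 c)).trans
    (add_le_add hu hv)
  rw [← hdist, Real.sqrt_le_iff] at h
  linarith [h.2]

lemma exists_eq_add_smul_of_dvd_sub {n p : ℕ} (hp : 0 < p) {a b : Fin n → ℤ} {s : ℝ}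
    (hdvd : ∀ i, (p : ℤ) ∣ a i - b i) (hab : ∑ i, ((a i : ℝ) - b i) ^ 2 ≤ s) :
    ∃ w : Fin n → ℤ, ∑ i, (w i).natAbs ≤ ⌊s / p ^ 2⌋₊ ∧ a = b + (p : ℤ) • w := by
  choose w hw using hdvd
  refine ⟨w, Nat.le_floor ?_, funext fun i => by simp [← hw i]⟩
  have hp2 : (0 : ℝ) < p ^ 2 := by positivity
  rw [le_div_iff₀ hp2]
  calc ((∑ i, (w i).natAbs : ℕ) : ℝ) * p ^ 2 ≤ (∑ i, (w i : ℝ) ^ 2) * p ^ 2 := by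
        push_cast
        gcongr with i
        rw [Nat.cast_natAbs]
        exact_mod_cast Int.natAbs_le_self_sq (w i)
    _ = ∑ i, ((a i : ℝ) - b i) ^ 2 := by
        rw [sum_mul]
        congr 1 with i
        rw [← Int.cast_sub, hw i]
        push_cast; ring
    _ ≤ s := hab

theorem equivalent_points_in_ball_general (p n : ℕ) (hp : p.Prime) (hn : 1 ≤ n)
    (c : Fin n → ℝ) (ρ : ℝ)
    (x : Fin n → ℤ) (μ : ℤ) :
    (Set.ncard {z : Fin n → ℤ | Real.sqrt (∑ i, ((z i : ℝ) - c i) ^ 2) ≤ ρ ∧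
        ∀ i, (p : ℤ) ∣ (z i - μ * x i)} : ℝ)
      ≤ 1 + (4 * ρ ^ 2 / (p : ℝ) ^ 2) *
          (8 * n * ρ ^ 2 / (p : ℝ) ^ 2) ^ ((4 * ρ ^ 2 / (p : ℝ) ^ 2) : ℝ) := by
  set E := {z : Fin n → ℤ | Real.sqrt (∑ i, ((z i : ℝ) - c i) ^ 2) ≤ ρ ∧
    ∀ i, (p : ℤ) ∣ (z i - μ * x i)}
  set t := 4 * ρ ^ 2 / (p : ℝ) ^ 2
  obtain hE | ⟨z₀, hz₀B, hz₀p⟩ := E.eq_empty_or_nonempty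
  · rw [hE, Set.ncard_empty, Nat.cast_zero]
    positivity
  have hcover : E ⊆ (fun w => z₀ + (p : ℤ) • w) '' {w | ∑ i, (w i).natAbs ≤ ⌊t⌋₊} := by
    rintro z ⟨hzB, hzp⟩
    obtain ⟨w, hw, rfl⟩ := exists_eq_add_smul_of_dvd_sub hp.pos
      (fun i => by simpa using dvd_sub (hzp i) (hz₀p i)) (sum_sq_sub_le_of_sqrt_le hzB hz₀B)
    exact ⟨w, hw, rfl⟩
  calc (E.ncard : ℝ) ≤ ((2 * n + 1 : ℕ) : ℝ) ^ ⌊t⌋₊ := by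
        exact_mod_cast (Set.ncard_le_ncard hcover ((finite_setOf_sum_natAbs_le n _).image _)).trans
          ((Set.ncard_image_le (finite_setOf_sum_natAbs_le n _)).trans
            (ncard_setOf_sum_natAbs_le n _))
    _ ≤ 1 + t * (2 * n * t) ^ t := pow_floor_le_one_add_mul_rpow hn (by positivity)
    _ = _ := by rw [show 2 * (n : ℝ) * t = 8 * n * ρ ^ 2 / (p : ℝ) ^ 2 by simp only [t]; ring]

/-- **Points of the same class modulo `p` inside a ball.**  Let `p` be a prime, `B = B_{c,n}(ρ)`
a closed ball, `x ∈ B ∩ ℤⁿ` and `μ ∈ ℤ`.  The number of points `z ∈ B ∩ ℤⁿ` with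
`z ≡ μx (mod p)` (coordinatewise) is at most `1 + (4ρ²/p²)·(8nρ²/p²)^(4ρ²/p²)`. -/
theorem equivalent_points_in_ball (p n : ℕ) (hp : p.Prime) (hn : 1 ≤ n)
    (c : Fin n → ℝ) (ρ : ℝ) (hρ : 0 < ρ)
    (x : Fin n → ℤ) (hx : Real.sqrt (∑ i, ((x i : ℝ) - c i) ^ 2) ≤ ρ) (μ : ℤ) :
    (Set.ncard {z : Fin n → ℤ | Real.sqrt (∑ i, ((z i : ℝ) - c i) ^ 2) ≤ ρ ∧
        ∀ i, (p : ℤ) ∣ (z i - μ * x i)} : ℝ)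
      ≤ 1 + (4 * ρ ^ 2 / (p : ℝ) ^ 2) *
          (8 * n * ρ ^ 2 / (p : ℝ) ^ 2) ^ ((4 * ρ ^ 2 / (p : ℝ) ^ 2) : ℝ) :=
  equivalent_points_in_ball_general p n hp hn c ρ x μ
end

section
/- Let p be a prime, m, n ≥ 1, ρ > 0, and let s ∈ 𝔽_p^m be nonzero. Let H be a random m × n matrix with independent entries uniform on 𝔽_p, and let X be the number of x ∈ ℤⁿ with ‖x‖ ≤ ρ, x ∉ pℤⁿ, and Hx ≡ s (mod p). Then Var(X) ≤ (1 + (4ρ²/p²)·(8nρ²/p²)^{4ρ²/p²}) · E[X]. -/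
/-!
`X` is a sum of indicators `1[Hx = s]` over the admissible `x`, so its variance is the sum of
the covariances of pairs. Writing `u, w` for the reductions of `x, y` mod `p` (both nonzero):
if `u, w` are linearly independent then `Hu, Hw` are independent and uniform, and the pair
contributes nothing; if `w = a • u` with `w ≠ u`, then `Hu = Hw = s` would force `a • s = s`,
impossible for `s ≠ 0`, so the covariance is negative. Only pairs with `y ≡ x (mod p)` remain,
each contributing at most `P(Hx = s)`, whence `Var X ≤ E X · max_x #{y : y ≡ x}`.

Such a `y` is `x + p z` with `‖z‖ ≤ 2ρ/p`. An integer vector of norm `≤ R` has at most `R²`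
nonzero coordinates, each of absolute value `≤ R`, which leaves at most `1 + R² (2nR²)^{R²}`
choices for `z`.
-/

open Finset Matrix

section CountingVariance

variable {Ω α β : Type*} [Fintype Ω]

theorem sum_sq_sub_mean (f : Ω → ℝ) :
    ∑ ω, (f ω - (∑ ω', f ω') / Fintype.card Ω) ^ 2
      = ∑ ω, f ω ^ 2 - (∑ ω, f ω) ^ 2 / Fintype.card Ω := by
  rcases isEmpty_or_nonempty Ω with hΩ | hΩ
  · simp
  have hN : (Fintype.card Ω : ℝ) ≠ 0 := by positivity
  simp only [sub_sq, sum_add_distrib, sum_sub_distrib, ← sum_mul, sum_const, card_univ,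
    nsmul_eq_mul, mul_assoc, ← mul_sum]
  field_simp
  ring

variable (S : Finset α) (P : α → Ω → Prop) [∀ x ω, Decidable (P x ω)]

theorem sum_card_filter_eq_sum_card_filter :
    ∑ ω, #{x ∈ S | P x ω} = ∑ x ∈ S, #{ω | P x ω} :=
  (sum_card_bipartiteAbove_eq_sum_card_bipartiteBelow _).symm

theorem sum_card_filter_sq :
    ∑ ω, #{x ∈ S | P x ω} ^ 2 = ∑ x ∈ S, ∑ y ∈ S, #{ω | P x ω ∧ P y ω} := by
  have hsq (ω : Ω) : #{x ∈ S | P x ω} ^ 2 = #{xy ∈ S ×ˢ S | P xy.1 ω ∧ P xy.2 ω} := by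
    rw [sq, ← card_product, ← filter_product]
  simp_rw [hsq, sum_card_filter_eq_sum_card_filter, sum_product]

theorem sum_sq_sub_mean_card_filter :
    ∑ ω, ((#{x ∈ S | P x ω} : ℝ) - (∑ ω', (#{x ∈ S | P x ω'} : ℝ)) / Fintype.card Ω) ^ 2
      = ∑ x ∈ S, ∑ y ∈ S, ((#{ω | P x ω ∧ P y ω} : ℝ)
          - #{ω | P x ω} * #{ω | P y ω} / Fintype.card Ω) := by
  rw [sum_sq_sub_mean]
  have h1 := congrArg (Nat.cast (R := ℝ)) (sum_card_filter_sq S P)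
  have h2 := congrArg (Nat.cast (R := ℝ)) (sum_card_filter_eq_sum_card_filter S P)
  push_cast at h1 h2
  rw [h1, h2, sq, sum_mul_sum]
  simp_rw [sum_div, ← sum_sub_distrib]

theorem variance_card_filter_le [DecidableEq β] (r : α → β) (B : ℝ)
    (hcov : ∀ x ∈ S, ∀ y ∈ S, (#{ω | P x ω ∧ P y ω} : ℝ)
      - #{ω | P x ω} * #{ω | P y ω} / Fintype.card Ω
        ≤ if r y = r x then (#{ω | P x ω} : ℝ) else 0)
    (hclass : ∀ x ∈ S, (#{y ∈ S | r y = r x} : ℝ) ≤ B) :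
    (∑ ω, ((#{x ∈ S | P x ω} : ℝ) - (∑ ω', (#{x ∈ S | P x ω'} : ℝ)) / Fintype.card Ω) ^ 2)
        / Fintype.card Ω
      ≤ B * ((∑ ω, (#{x ∈ S | P x ω} : ℝ)) / Fintype.card Ω) := by
  rw [mul_div_assoc']
  gcongr ?_ / _
  have h2 := congrArg (Nat.cast (R := ℝ)) (sum_card_filter_eq_sum_card_filter S P)
  push_cast at h2
  rw [sum_sq_sub_mean_card_filter, h2, mul_sum]
  refine sum_le_sum fun x hx => ?_
  calc ∑ y ∈ S, ((#{ω | P x ω ∧ P y ω} : ℝ) - #{ω | P x ω} * #{ω | P y ω} / Fintype.card Ω)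
      ≤ ∑ y ∈ S, if r y = r x then (#{ω | P x ω} : ℝ) else 0 := sum_le_sum (hcov x hx)
    _ = #{ω | P x ω} * #{y ∈ S | r y = r x} := by
        rw [sum_ite, sum_const_zero, sum_const]
        simp [mul_comm]
    _ ≤ B * #{ω | P x ω} := by rw [mul_comm B]; gcongr; exact hclass x hx

end CountingVariance

theorem AddMonoidHom.card_filter_eq_mul_card {G G' : Type*} [AddCommGroup G] [Fintype G]
    [AddCommGroup G'] [Fintype G'] [DecidableEq G'] (f : G →+ G')
    (hf : Function.Surjective f) (t : G') :
    #{x | f x = t} * Fintype.card G' = Fintype.card G := by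
  obtain ⟨a, rfl⟩ := hf t
  have hfiber (t' : G') : #{x | f x = t'} = #{x | f x = f a} := by
    obtain ⟨b, rfl⟩ := hf t'
    refine card_equiv (Equiv.addRight (a - b)) fun x => ?_
    simp [← eq_sub_iff_add_eq]
  have hsum := card_eq_sum_card_fiberwise (s := univ) (t := univ) fun x _ => mem_univ (f x)
  rw [card_univ] at hsum
  simp [hsum, hfiber, mul_comm]

section MatrixFibers

variable {ι κ k K : Type*} [Fintype κ] [Fintype k] [Field K]

theorem surjective_mulVec_of_linearIndependent {v : k → κ → K} (hv : LinearIndependent K v) :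
    Function.Surjective fun (H : Matrix ι κ K) j => H *ᵥ v j := by
  have hrank : (Matrix.of v).rank = Fintype.card k := hv.rank_matrix
  have hsurj : Function.Surjective (Matrix.of v).mulVecLin := by
    rw [← LinearMap.range_eq_top]
    apply Submodule.eq_top_of_finrank_eq
    rw [← Matrix.rank, hrank, Module.finrank_fintype_fun_eq_card]
  intro t
  choose u hu using fun i => hsurj fun j => t j i
  refine ⟨Matrix.of u, funext fun j => funext fun i => ?_⟩
  rw [← congrFun (hu i) j]
  simp [mulVec, dotProduct_comm]

theorem eq_of_mulVec_eq_of_not_linearIndependent {u w : κ → K} (hu : u ≠ 0)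
    (huw : ¬LinearIndependent K ![u, w]) {H : Matrix ι κ K} {s : ι → K} (hs : s ≠ 0)
    (hHu : H *ᵥ u = s) (hHw : H *ᵥ w = s) : w = u := by
  obtain ⟨a, rfl⟩ : ∃ a : K, a • u = w := by
    simpa [LinearIndependent.pair_iff' hu] using huw
  have ha : (a - 1) • s = 0 := by
    rw [sub_smul, one_smul, sub_eq_zero, ← hHu, ← mulVec_smul, hHu, hHw]
  rw [smul_eq_zero, sub_eq_zero] at ha
  rw [ha.resolve_right hs, one_smul]

variable [Fintype ι] [DecidableEq ι] [DecidableEq κ] [Fintype K] [DecidableEq K]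

theorem card_filter_forall_mulVec_eq [DecidableEq k] {v : k → κ → K} (hv : LinearIndependent K v)
    (t : k → ι → K) :
    (#{H : Matrix ι κ K | ∀ j, H *ᵥ v j = t j} : ℝ)
      = Fintype.card (Matrix ι κ K) / Fintype.card (k → ι → K) := by
  let f : Matrix ι κ K →+ (k → ι → K) :=
    AddMonoidHom.mk' (fun H j => H *ᵥ v j) fun A B => funext fun j => add_mulVec A B (v j)
  have h := f.card_filter_eq_mul_card (surjective_mulVec_of_linearIndependent hv) t
  rw [eq_div_iff (by positivity), ← Nat.cast_mul, ← h]
  simp [f, funext_iff]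

theorem card_filter_mulVec_eq {u : κ → K} (hu : u ≠ 0) (s : ι → K) :
    (#{H : Matrix ι κ K | H *ᵥ u = s} : ℝ)
      = Fintype.card (Matrix ι κ K) / Fintype.card (ι → K) := by
  have h := card_filter_forall_mulVec_eq (v := ![u]) (linearIndependent_unique_iff.mpr hu) ![s]
  rw [Fintype.card_fun, Fintype.card_fin, pow_one] at h
  simpa only [Fin.forall_fin_one, cons_val_zero] using h

theorem card_filter_mulVec_eq_and_mulVec_eq {u w : κ → K} (huw : LinearIndependent K ![u, w])
    (s t : ι → K) :
    (#{H : Matrix ι κ K | H *ᵥ u = s ∧ H *ᵥ w = t} : ℝ)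
      = Fintype.card (Matrix ι κ K) / Fintype.card (ι → K) ^ 2 := by
  have h := card_filter_forall_mulVec_eq huw ![s, t]
  rw [Fintype.card_fun, Fintype.card_fin, Nat.cast_pow] at h
  simpa only [Fin.forall_fin_two, cons_val_zero, cons_val_one] using h

theorem card_filter_mulVec_eq_and_mulVec_eq_sub_le {u w : κ → K} (hu : u ≠ 0)
    {s : ι → K} (hs : s ≠ 0) :
    (#{H : Matrix ι κ K | H *ᵥ u = s ∧ H *ᵥ w = s} : ℝ)
        - #{H : Matrix ι κ K | H *ᵥ u = s} * #{H : Matrix ι κ K | H *ᵥ w = s}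
          / Fintype.card (Matrix ι κ K)
      ≤ if w = u then (#{H : Matrix ι κ K | H *ᵥ u = s} : ℝ) else 0 := by
  split_ifs with hwu
  · subst hwu
    simp only [and_self, sub_le_self_iff]
    positivity
  by_cases huw : LinearIndependent K ![u, w]
  · rw [card_filter_mulVec_eq_and_mulVec_eq huw, card_filter_mulVec_eq hu,
      card_filter_mulVec_eq (by simpa using huw.ne_zero 1)]
    field_simp
    simp
  · have hempty : #{H : Matrix ι κ K | H *ᵥ u = s ∧ H *ᵥ w = s} = 0 := by
      simp only [card_eq_zero, filter_eq_empty_iff, mem_univ, true_implies, not_and]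
      exact fun H hHu hHw => hwu (eq_of_mulVec_eq_of_not_linearIndependent hu huw hs hHu hHw)
    rw [hempty, Nat.cast_zero, zero_sub, neg_nonpos]
    positivity

end MatrixFibers

theorem choose_mul_pow_le_rpow (n : ℕ) {k : ℕ} {R : ℝ} (hR : 0 ≤ R) (hk : 1 ≤ k)
    (hkR : (k : ℝ) ≤ R ^ 2) :
    (n.choose k * (2 * ⌊R⌋₊) ^ k : ℝ) ≤ (2 * n * R ^ 2) ^ (R ^ 2) := by
  rcases n.eq_zero_or_pos with rfl | hn
  · simp [Nat.choose_eq_zero_of_lt hk, Real.rpow_nonneg]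
  have hk1 : (1 : ℝ) ≤ k := by exact_mod_cast hk
  have hFR : (⌊R⌋₊ : ℝ) ≤ R ^ 2 := (Nat.floor_le hR).trans (by nlinarith)
  have hbase : (1 : ℝ) ≤ 2 * n * R ^ 2 := by
    have : (1 : ℝ) ≤ n := by exact_mod_cast hn
    nlinarith
  calc (n.choose k * (2 * ⌊R⌋₊) ^ k : ℝ) ≤ n ^ k * (2 * ⌊R⌋₊) ^ k := by
        gcongr; exact_mod_cast Nat.choose_le_pow n k
    _ = (2 * n * ⌊R⌋₊) ^ k := by ring
    _ ≤ (2 * n * R ^ 2) ^ k := by gcongr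
    _ = (2 * n * R ^ 2) ^ (k : ℝ) := (Real.rpow_natCast _ k).symm
    _ ≤ (2 * n * R ^ 2) ^ (R ^ 2) := Real.rpow_le_rpow_of_exponent_le hbase hkR

section Lattice

def reduceMod (p : ℕ) (ι : Type*) : (ι → ℤ) →+ (ι → ZMod p) :=
  (Int.castAddHom (ZMod p)).compLeft ι

variable {ι : Type*}

theorem reduceMod_eq_zero_iff {p : ℕ} {x : ι → ℤ} :
    reduceMod p ι x = 0 ↔ ∀ i, (p : ℤ) ∣ x i := by
  simp [reduceMod, funext_iff, ZMod.intCast_zmod_eq_zero_iff_dvd]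

variable [Fintype ι]

def intToEuclidean : (ι → ℤ) →+ EuclideanSpace ℝ ι where
  toFun x := WithLp.toLp 2 fun i => (x i : ℝ)
  map_zero' := by ext; simp
  map_add' x y := by ext; simp

theorem norm_intToEuclidean (x : ι → ℤ) : ‖intToEuclidean x‖ = √(∑ i, (x i : ℝ) ^ 2) := by
  simp [intToEuclidean, EuclideanSpace.norm_eq]

theorem norm_intToEuclidean_sq (x : ι → ℤ) : ‖intToEuclidean x‖ ^ 2 = ∑ i, (x i : ℝ) ^ 2 := by
  rw [norm_intToEuclidean, Real.sq_sqrt (by positivity)]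

theorem abs_le_norm_intToEuclidean (x : ι → ℤ) (i : ι) : |(x i : ℝ)| ≤ ‖intToEuclidean x‖ :=
  PiLp.norm_apply_le (intToEuclidean x) i

variable [DecidableEq ι]

variable (ι) in
noncomputable def latticeBall (r : ℝ) : Finset (ι → ℤ) :=
  {x ∈ Fintype.piFinset fun _ => Icc (-⌈r⌉) ⌈r⌉ | ‖intToEuclidean x‖ ≤ r}

theorem mem_latticeBall {r : ℝ} {x : ι → ℤ} : x ∈ latticeBall ι r ↔ ‖intToEuclidean x‖ ≤ r := by
  refine ⟨fun hx => (mem_filter.mp hx).2, fun hx => mem_filter.mpr ⟨?_, hx⟩⟩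
  refine Fintype.mem_piFinset.mpr fun i => mem_Icc.mpr ?_
  have hi := abs_le.mp ((abs_le_norm_intToEuclidean x i).trans hx)
  constructor
  · exact_mod_cast (show ((-⌈r⌉ : ℤ) : ℝ) ≤ x i by push_cast; linarith [Int.le_ceil r])
  · exact_mod_cast (show (x i : ℝ) ≤ ⌈r⌉ by linarith [Int.le_ceil r])

theorem mem_Icc_floor_of_mem_latticeBall {R : ℝ} {x : ι → ℤ} (hx : x ∈ latticeBall ι R)
    (i : ι) : x i ∈ Icc (-(⌊R⌋₊ : ℤ)) ⌊R⌋₊ := by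
  have hR : 0 ≤ R := (norm_nonneg _).trans (mem_latticeBall.mp hx)
  have hi := abs_le.mp ((abs_le_norm_intToEuclidean x i).trans (mem_latticeBall.mp hx))
  rw [Int.natCast_floor_eq_floor hR, mem_Icc, neg_le, Int.le_floor, Int.le_floor]
  push_cast
  constructor <;> linarith

theorem card_support_le_of_mem_latticeBall {R : ℝ} {x : ι → ℤ} (hx : x ∈ latticeBall ι R) :
    (#{i | x i ≠ 0} : ℝ) ≤ R ^ 2 := by
  have hR : 0 ≤ R := (norm_nonneg _).trans (mem_latticeBall.mp hx)
  calc (#{i | x i ≠ 0} : ℝ) = ∑ i with x i ≠ 0, 1 := by simp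
    _ ≤ ∑ i with x i ≠ 0, (x i : ℝ) ^ 2 := by
        refine sum_le_sum fun i hi => ?_
        have : (1 : ℝ) ≤ |(x i : ℝ)| := by exact_mod_cast Int.one_le_abs (mem_filter.mp hi).2
        nlinarith [sq_abs (x i : ℝ)]
    _ ≤ ∑ i, (x i : ℝ) ^ 2 :=
        sum_le_sum_of_subset_of_nonneg (subset_univ _) fun _ _ _ => by positivity
    _ = ‖intToEuclidean x‖ ^ 2 := (norm_intToEuclidean_sq x).symm
    _ ≤ R ^ 2 := by gcongr; exact mem_latticeBall.mp hx

noncomputable def boxWithSupport (T : Finset ι) (F : ℕ) : Finset (ι → ℤ) :=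
  Fintype.piFinset fun i => if i ∈ T then (Icc (-(F : ℤ)) F).erase 0 else {0}

theorem card_boxWithSupport (T : Finset ι) (F : ℕ) : #(boxWithSupport T F) = (2 * F) ^ #T := by
  have hcard : #((Icc (-(F : ℤ)) F).erase 0) = 2 * F := by
    rw [card_erase_of_mem (by simp), Int.card_Icc]
    omega
  simp [boxWithSupport, Fintype.card_piFinset, apply_ite, hcard, prod_ite_mem]

theorem card_erase_zero_latticeBall_le (R : ℝ) :
    #((latticeBall ι R).erase 0)
      ≤ ∑ k ∈ Icc 1 ⌊R ^ 2⌋₊, (Fintype.card ι).choose k * (2 * ⌊R⌋₊) ^ k := by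
  calc #((latticeBall ι R).erase 0)
      ≤ #((Icc 1 ⌊R ^ 2⌋₊).biUnion fun k =>
          (powersetCard k univ).biUnion fun T => boxWithSupport T ⌊R⌋₊) := by
        refine card_le_card fun x hx => ?_
        obtain ⟨hx0, hx⟩ := mem_erase.mp hx
        simp only [mem_biUnion, mem_powersetCard, mem_Icc]
        refine ⟨#{i | x i ≠ 0}, ⟨?_, ?_⟩, ({i | x i ≠ 0} : Finset ι), ⟨subset_univ _, rfl⟩, ?_⟩
        · obtain ⟨i, hi⟩ := Function.ne_iff.mp hx0
          exact card_pos.mpr ⟨i, by simpa using hi⟩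
        · exact Nat.le_floor (card_support_le_of_mem_latticeBall hx)
        · refine Fintype.mem_piFinset.mpr fun i => ?_
          by_cases hi : x i = 0 <;> simp [hi, mem_Icc_floor_of_mem_latticeBall hx i]
    _ ≤ ∑ k ∈ Icc 1 ⌊R ^ 2⌋₊, ∑ T ∈ powersetCard k univ, #(boxWithSupport T ⌊R⌋₊) :=
        card_biUnion_le.trans (sum_le_sum fun _ _ => card_biUnion_le)
    _ = ∑ k ∈ Icc 1 ⌊R ^ 2⌋₊, (Fintype.card ι).choose k * (2 * ⌊R⌋₊) ^ k := by
        refine sum_congr rfl fun k _ => ?_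
        rw [sum_congr rfl fun T hT => by rw [card_boxWithSupport, (mem_powersetCard.mp hT).2],
          sum_const, card_powersetCard, card_univ, smul_eq_mul]

theorem card_latticeBall_le {R : ℝ} (hR : 0 ≤ R) :
    (#(latticeBall ι R) : ℝ) ≤ 1 + R ^ 2 * (2 * Fintype.card ι * R ^ 2) ^ (R ^ 2) := by
  have h0 : (0 : ι → ℤ) ∈ latticeBall ι R := mem_latticeBall.mpr (by simpa using hR)
  rw [← card_erase_add_one h0, Nat.cast_add, Nat.cast_one, add_comm]
  gcongr
  calc (#((latticeBall ι R).erase 0) : ℝ)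
      ≤ ∑ k ∈ Icc 1 ⌊R ^ 2⌋₊, ((Fintype.card ι).choose k * (2 * ⌊R⌋₊) ^ k : ℝ) := by
        exact_mod_cast card_erase_zero_latticeBall_le R
    _ ≤ ∑ k ∈ Icc 1 ⌊R ^ 2⌋₊, (2 * Fintype.card ι * R ^ 2) ^ (R ^ 2) := by
        refine sum_le_sum fun k hk => choose_mul_pow_le_rpow _ hR (mem_Icc.mp hk).1 ?_
        exact (Nat.cast_le.mpr (mem_Icc.mp hk).2).trans (Nat.floor_le (by positivity))
    _ ≤ R ^ 2 * (2 * Fintype.card ι * R ^ 2) ^ (R ^ 2) := by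
        rw [sum_const, Nat.card_Icc, add_tsub_cancel_right, nsmul_eq_mul]
        gcongr
        exact Nat.floor_le (by positivity)

theorem card_filter_reduceMod_eq_le {p : ℕ} (hp : 0 < p) {ρ : ℝ} {x : ι → ℤ}
    (hx : ‖intToEuclidean x‖ ≤ ρ) :
    #{y ∈ latticeBall ι ρ | reduceMod p ι y = reduceMod p ι x}
      ≤ #(latticeBall ι (2 * ρ / p)) := by
  refine (card_le_card fun y hy => ?_).trans (card_image_le (f := fun z => x + p • z))
  obtain ⟨hyρ, hyx⟩ := mem_filter.mp hy
  rw [← sub_eq_zero, ← map_sub, reduceMod_eq_zero_iff] at hyx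
  choose z hz using hyx
  have hyz : y = x + p • z := by
    ext i
    simp [← hz i]
  refine mem_image.mpr ⟨z, mem_latticeBall.mpr ?_, hyz.symm⟩
  have hpR : (0 : ℝ) < p := by exact_mod_cast hp
  rw [le_div_iff₀ hpR, mul_comm, ← nsmul_eq_mul, ← RCLike.norm_nsmul ℝ, ← map_nsmul,
    eq_sub_of_add_eq' hyz.symm, map_sub]
  calc ‖intToEuclidean y - intToEuclidean x‖
      ≤ ‖intToEuclidean y‖ + ‖intToEuclidean x‖ := norm_sub_le _ _
    _ ≤ 2 * ρ := by linarith [mem_latticeBall.mp hyρ]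

theorem ncard_solutions_eq_card_filter {κ : Type*} [Fintype κ] (p : ℕ) (ρ : ℝ)
    (H : Matrix κ ι (ZMod p)) (s : κ → ZMod p) :
    Set.ncard {x : ι → ℤ | √(∑ i, (x i : ℝ) ^ 2) ≤ ρ ∧ ¬(∀ i, (p : ℤ) ∣ x i) ∧
        H *ᵥ (fun j => (x j : ZMod p)) = s}
      = #{x ∈ {x ∈ latticeBall ι ρ | reduceMod p ι x ≠ 0} | H *ᵥ reduceMod p ι x = s} := by
  rw [← Set.ncard_coe_finset]
  congr 1
  ext x
  simp only [coe_filter, mem_filter, Set.mem_ofPred_eq, mem_latticeBall, norm_intToEuclidean,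
    ne_eq, reduceMod_eq_zero_iff, and_assoc]
  rfl

end Lattice

theorem variance_of_solution_count_general (p m n : ℕ) (hp : p.Prime)
    (ρ : ℝ) (s : Fin m → ZMod p) (hs : s ≠ 0) :
    letI : NeZero p := ⟨hp.ne_zero⟩
    let X : Matrix (Fin m) (Fin n) (ZMod p) → ℕ := fun H =>
      Set.ncard {x : Fin n → ℤ |
        Real.sqrt (∑ i, ((x i : ℝ)) ^ 2) ≤ ρ ∧
        ¬(∀ i, (p : ℤ) ∣ x i) ∧
        H.mulVec (fun j => ((x j : ℤ) : ZMod p)) = s}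
    let E : ℝ := (∑ H : Matrix (Fin m) (Fin n) (ZMod p), (X H : ℝ)) / (p : ℝ) ^ (m * n)
    (∑ H : Matrix (Fin m) (Fin n) (ZMod p), ((X H : ℝ) - E) ^ 2) / (p : ℝ) ^ (m * n)
      ≤ (1 + (4 * ρ ^ 2 / (p : ℝ) ^ 2) *
          (8 * n * ρ ^ 2 / (p : ℝ) ^ 2) ^ ((4 * ρ ^ 2 / (p : ℝ) ^ 2) : ℝ)) * E := by
  have : Fact p.Prime := ⟨hp⟩
  intro X E
  set S := {x ∈ latticeBall (Fin n) ρ | reduceMod p (Fin n) x ≠ 0}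
  have hX (H : Matrix (Fin m) (Fin n) (ZMod p)) :
      X H = #{x ∈ S | H *ᵥ reduceMod p (Fin n) x = s} :=
    ncard_solutions_eq_card_filter p ρ H s
  have hcard : (Fintype.card (Matrix (Fin m) (Fin n) (ZMod p)) : ℝ) = p ^ (m * n) := by
    simp [Fintype.card_congr Matrix.of.symm, ← pow_mul, mul_comm]
  simp only [E, hX, ← hcard]
  refine variance_card_filter_le S (fun x H => H *ᵥ reduceMod p (Fin n) x = s)
    (reduceMod p (Fin n)) _ (fun x hx y _ =>
      card_filter_mulVec_eq_and_mulVec_eq_sub_le (mem_filter.mp hx).2 hs) fun x hx => ?_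
  obtain ⟨hxρ, -⟩ := mem_filter.mp hx
  have hρ : 0 ≤ ρ := (norm_nonneg _).trans (mem_latticeBall.mp hxρ)
  calc (#{y ∈ S | reduceMod p (Fin n) y = reduceMod p (Fin n) x} : ℝ)
      ≤ #{y ∈ latticeBall (Fin n) ρ | reduceMod p (Fin n) y = reduceMod p (Fin n) x} := by
        gcongr; exact filter_subset _ _
    _ ≤ #(latticeBall (Fin n) (2 * ρ / p)) := by
        exact_mod_cast card_filter_reduceMod_eq_le hp.pos (mem_latticeBall.mp hxρ)
    _ ≤ 1 + (2 * ρ / p) ^ 2 * (2 * Fintype.card (Fin n) * (2 * ρ / p) ^ 2) ^ ((2 * ρ / p) ^ 2) :=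
        card_latticeBall_le (by positivity)
    _ = _ := by
        rw [Fintype.card_fin, div_pow, mul_pow]
        ring_nf

/-- **Variance bound for the number of solutions of a random linear system.**  Let `p` be a
prime, `m, n ≥ 1`, `ρ > 0`, `s ∈ 𝔽_p^m` nonzero, and let `H` be uniformly distributed over
`m × n` matrices over `𝔽_p`.  Let `X(H)` be the number of `x ∈ ℤⁿ` with `‖x‖ ≤ ρ`,
`x ∉ pℤⁿ` and `Hx ≡ s (mod p)`.  Then
`Var(X) ≤ (1 + (4ρ²/p²)·(8nρ²/p²)^{4ρ²/p²}) · E[X]`, where expectation and variance are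
over the uniform choice of `H` (the number of matrices is `p^{m·n}`). -/
theorem variance_of_solution_count (p m n : ℕ) (hp : p.Prime) (hm : 1 ≤ m) (hn : 1 ≤ n)
    (ρ : ℝ) (hρ : 0 < ρ) (s : Fin m → ZMod p) (hs : s ≠ 0) :
    letI : NeZero p := ⟨hp.ne_zero⟩
    let X : Matrix (Fin m) (Fin n) (ZMod p) → ℕ := fun H =>
      Set.ncard {x : Fin n → ℤ |
        Real.sqrt (∑ i, ((x i : ℝ)) ^ 2) ≤ ρ ∧
        ¬(∀ i, (p : ℤ) ∣ x i) ∧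
        H.mulVec (fun j => ((x j : ℤ) : ZMod p)) = s}
    let E : ℝ := (∑ H : Matrix (Fin m) (Fin n) (ZMod p), (X H : ℝ)) / (p : ℝ) ^ (m * n)
    (∑ H : Matrix (Fin m) (Fin n) (ZMod p), ((X H : ℝ) - E) ^ 2) / (p : ℝ) ^ (m * n)
      ≤ (1 + (4 * ρ ^ 2 / (p : ℝ) ^ 2) *
          (8 * n * ρ ^ 2 / (p : ℝ) ^ 2) ^ ((4 * ρ ^ 2 / (p : ℝ) ^ 2) : ℝ)) * E :=
  variance_of_solution_count_general p m n hp ρ s hs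
end

section
/- (Asymptotic goodness of non-binary LDPC codes.) Fix a rational R_f ∈ (0,1), D with D > 1/(1−R_f), λ > 1/(D(1−R_f)−1), and δ < D(1−R_f)/(D+1). Let p : ℕ → ℕ be a sequence of primes with p(n)/n^λ → 1, and restrict to n with n(1−R_f) ∈ ℕ. For each such n, let H(n) ∈ {0,1}^{n(1−R_f) × n} be a binary skeleton matrix whose Tanner graph satisfies: for every set S of columns with |S| ≤ n/(D+1), |N(S)| ≥ D(1−R_f)|S|. Let ℍ(n) be the associated random matrix over 𝔽_{p(n)} (independent uniform entries at positions where H(n) has a 1, zero elsewhere), and let C_f = ker ℍ(n) ⊆ 𝔽_{p(n)}^n be the corresponding LDPC code. Then the probability that C_f contains a nonzero codeword of Hamming weight at most δn tends to 0 as n → ∞; i.e., with probability tending to 1 the minimum Hamming distance of C_f exceeds δn. -/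
/-!
For a nonzero `x` with support `S`, the map `M ↦ M x` on the matrices supported on the skeleton
is additive and its image contains every vector supported on the Tanner neighbourhood `N(S)`;
hence `ℍ x = 0` with probability at most `p ^ (-|N(S)|)`. A union bound over the at most `p ^ |S|`
vectors with support `S` bounds the probability by `∑ p ^ (|S| - |N(S)|)` over the nonempty `S`
with `|S| ≤ δn`. Write `c = D(1-R_f)`. If `|S| ≤ n/(D+1)`, expansion gives `|N(S)| ≥ c|S|`, and
these terms sum to `O(n p^(1-c)) = O(n^(1 - λ(c-1))) → 0`. A larger `S` contains a subset of size
`⌊n/(D+1)⌋`, so `|N(S)| ≥ c(n/(D+1) - 1)` and each of the at most `2^n` such terms is at most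
`p^(c - γn)` with `γ = c/(D+1) - δ > 0`; as `p → ∞`, `2^n p^(c - γn) → 0`.
-/

open Finset Filter Matrix Topology

section Vanishing

variable {α R : Type*} [DecidableEq α] [Zero R]

def vanishingOutsideEquiv (T : Finset α) :
    {x : α → R // ∀ a ∉ T, x a = 0} ≃ (T → R) where
  toFun x a := x.1 a
  invFun y := ⟨fun a => if h : a ∈ T then y ⟨a, h⟩ else 0, fun _ ha => dif_neg ha⟩
  left_inv x := by
    ext a
    by_cases h : a ∈ T
    · simp [h]
    · simp [h, x.2 a h]
  right_inv y := by ext a; simp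

lemma card_vanishingOutside (T : Finset α) :
    Nat.card {x : α → R // ∀ a ∉ T, x a = 0} = Nat.card R ^ #T := by
  rw [Nat.card_congr (vanishingOutsideEquiv T), Nat.card_fun, Nat.card_eq_finsetCard]

end Vanishing

section TannerGraph

variable {ι κ F : Type*}

variable (F) in
/-- The support of the law of the random matrix `ℍ` built on `H`; `ℍ` is uniform on it. -/
def supportedMatrices [AddGroup F] (H : Matrix ι κ Bool) :
    AddSubgroup (Matrix ι κ F) where
  carrier := {M | ∀ i j, H i j = false → M i j = 0}
  add_mem' hM hM' i j h := by simp [hM i j h, hM' i j h]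
  zero_mem' _ _ _ := rfl
  neg_mem' hM i j h := by simp [hM i j h]

def tannerEdges [Fintype ι] [Fintype κ] (H : Matrix ι κ Bool) : Finset (ι × κ) :=
  {q | H q.1 q.2 = true}

def mulVecHom [Fintype κ] [Ring F] (H : Matrix ι κ Bool) (x : κ → F) :
    supportedMatrices F H →+ (ι → F) :=
  (Matrix.mulVec.addMonoidHomLeft x).comp (supportedMatrices F H).subtype

lemma pi_single_mem_range_mulVecHom [Fintype κ] [DecidableEq ι] [DecidableEq κ] [DivisionRing F]
    (H : Matrix ι κ Bool) {x : κ → F} {i : ι} {j : κ} (hij : H i j = true) (hx : x j ≠ 0)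
    (a : F) : Pi.single i a ∈ (mulVecHom H x).range := by
  refine ⟨⟨Matrix.single i j (a / x j), fun i' j' h => ?_⟩, ?_⟩
  · rw [Matrix.single_apply, if_neg]
    rintro ⟨rfl, rfl⟩
    simp [hij] at h
  · simp [mulVecHom, Matrix.mulVec.addMonoidHomLeft, Matrix.single_mulVec, hx, Pi.single]

variable [Fintype ι] [DecidableEq ι] (H : Matrix ι κ Bool)

def tannerNbhd (S : Finset κ) : Finset ι :=
  S.biUnion fun j => {i | H i j = true}

variable {H}

lemma mem_tannerNbhd {S : Finset κ} {i : ι} : i ∈ tannerNbhd H S ↔ ∃ j ∈ S, H i j = true := by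
  simp [tannerNbhd]

variable (H)

lemma coe_tannerNbhd (S : Finset κ) :
    (tannerNbhd H S : Set ι) = {i | ∃ j ∈ (S : Set κ), H i j = true} :=
  Set.ext fun _ => mem_tannerNbhd

lemma tannerNbhd_mono {S T : Finset κ} (h : S ⊆ T) : tannerNbhd H S ⊆ tannerNbhd H T :=
  biUnion_subset_biUnion_of_subset_left _ h

end TannerGraph

section KernelCount

variable {ι κ F : Type*} [Fintype ι] [Fintype κ] [DecidableEq ι] [DecidableEq κ]
  (H : Matrix ι κ Bool)

lemma card_supportedMatrices_le [AddGroup F] [Finite F] :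
    Nat.card (supportedMatrices F H) ≤ Nat.card F ^ #(tannerEdges H) := by
  rw [← card_vanishingOutside]
  refine Nat.card_le_card_of_injective (fun M => ⟨fun q => M.1 q.1 q.2, fun q hq => ?_⟩) ?_
  · exact M.2 q.1 q.2 (by simpa [tannerEdges] using hq)
  · intro M M' h
    ext i j
    exact congrFun (congrArg Subtype.val h) (i, j)

variable [DivisionRing F] [DecidableEq F]

lemma mem_range_mulVecHom (x : κ → F) {y : ι → F}
    (hy : ∀ i ∉ tannerNbhd H {j | x j ≠ 0}, y i = 0) : y ∈ (mulVecHom H x).range := by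
  rw [← Finset.univ_sum_single y]
  refine AddSubgroup.sum_mem _ fun i _ => ?_
  by_cases hi : i ∈ tannerNbhd H {j | x j ≠ 0}
  · obtain ⟨j, hj, hij⟩ := mem_tannerNbhd.1 hi
    exact pi_single_mem_range_mulVecHom H hij (mem_filter.1 hj).2 _
  · rw [hy i hi, Pi.single_zero]
    exact AddSubgroup.zero_mem _

lemma ncard_mulVec_eq_zero_mul_pow_le [Finite F] (x : κ → F) :
    {M : Matrix ι κ F | (∀ i j, H i j = false → M i j = 0) ∧ M *ᵥ x = 0}.ncard
      * Nat.card F ^ #(tannerNbhd H {j | x j ≠ 0}) ≤ Nat.card F ^ #(tannerEdges H) := by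
  have hker : {M : Matrix ι κ F | (∀ i j, H i j = false → M i j = 0) ∧ M *ᵥ x = 0}.ncard
      ≤ Nat.card (mulVecHom H x).ker :=
    Nat.card_le_card_of_injective (fun M => ⟨⟨M.1, M.2.1⟩, M.2.2⟩)
      fun M M' h => Subtype.ext (congrArg (fun N => N.1.1) h)
  have hrange : Nat.card F ^ #(tannerNbhd H {j | x j ≠ 0}) ≤ Nat.card (mulVecHom H x).range := by
    rw [← card_vanishingOutside]
    exact Nat.card_le_card_of_injective (fun y => ⟨y.1, mem_range_mulVecHom H x y.2⟩)
      fun y y' h => Subtype.ext (by simpa using congrArg Subtype.val h)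
  calc _ ≤ Nat.card (mulVecHom H x).ker * Nat.card (mulVecHom H x).range :=
        Nat.mul_le_mul hker hrange
    _ = Nat.card (supportedMatrices F H) := by
        rw [← AddSubgroup.index_ker, AddSubgroup.card_mul_index]
    _ ≤ _ := card_supportedMatrices_le H

end KernelCount

noncomputable def lowWeightSupports (κ : Type*) [Fintype κ] [DecidableEq κ] (w : ℝ) :
    Finset (Finset κ) :=
  {S | S.Nonempty ∧ (#S : ℝ) ≤ w}

lemma card_filter_support_eq_le {κ F : Type*} [Fintype κ] [DecidableEq κ] [Zero F] [Fintype F]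
    [DecidableEq F] (X : Finset (κ → F)) (S : Finset κ) :
    #{x ∈ X | ({j | x j ≠ 0} : Finset κ) = S} ≤ Nat.card F ^ #S := by
  calc #{x ∈ X | ({j | x j ≠ 0} : Finset κ) = S} ≤ #{x : κ → F | ∀ a ∉ S, x a = 0} := by
        refine card_le_card fun x hx => mem_filter.2 ⟨mem_univ x, fun a ha => ?_⟩
        by_contra h
        exact ha ((mem_filter.1 hx).2 ▸ mem_filter.2 ⟨mem_univ a, h⟩)
    _ = Nat.card F ^ #S := by
        rw [← card_vanishingOutside, ← Fintype.card_subtype, Nat.card_eq_fintype_card]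

section UnionBound

variable {ι κ F : Type*} [Fintype ι] [Fintype κ] [DecidableEq ι] [DecidableEq κ]
  [DivisionRing F] [Fintype F] [DecidableEq F]

lemma sum_one_div_pow_card_tannerNbhd_le (H : Matrix ι κ Bool) (w : ℝ) :
    ∑ x ∈ ({x | x ≠ 0 ∧ ({j | x j ≠ 0}.ncard : ℝ) ≤ w} : Finset (κ → F)),
        1 / (Nat.card F : ℝ) ^ #(tannerNbhd H {j | x j ≠ 0})
      ≤ ∑ S ∈ lowWeightSupports κ w,
          (Nat.card F : ℝ) ^ #S / (Nat.card F : ℝ) ^ #(tannerNbhd H S) := by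
  set X : Finset (κ → F) := {x | x ≠ 0 ∧ ({j | x j ≠ 0}.ncard : ℝ) ≤ w}
  have hsupp : ∀ x ∈ X, ({j | x j ≠ 0} : Finset κ) ∈ lowWeightSupports κ w := by
    intro x hx
    obtain ⟨hx0, hxw⟩ := (mem_filter.1 hx).2
    obtain ⟨j, hj⟩ := Function.ne_iff.1 hx0
    refine mem_filter.2 ⟨mem_univ _, ⟨j, by simpa using hj⟩, ?_⟩
    simpa [← Set.ncard_coe_finset] using hxw
  rw [← sum_fiberwise_of_maps_to hsupp]
  refine sum_le_sum fun S _ => ?_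
  rw [sum_congr rfl fun x hx => by rw [(mem_filter.1 hx).2], sum_const, nsmul_eq_mul,
    div_eq_mul_one_div (_ ^ #S)]
  gcongr
  exact_mod_cast card_filter_support_eq_le X S

lemma ncard_lowWeight_div_le (H : Matrix ι κ Bool) (w : ℝ) :
    ({M : Matrix ι κ F | (∀ i j, H i j = false → M i j = 0) ∧
        ∃ x : κ → F, x ≠ 0 ∧ M *ᵥ x = 0 ∧ ({j | x j ≠ 0}.ncard : ℝ) ≤ w}.ncard : ℝ)
        / (Nat.card F : ℝ) ^ {q : ι × κ | H q.1 q.2 = true}.ncard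
      ≤ ∑ S ∈ lowWeightSupports κ w,
          (Nat.card F : ℝ) ^ #S / (Nat.card F : ℝ) ^ #(tannerNbhd H S) := by
  set Bad := {M : Matrix ι κ F | (∀ i j, H i j = false → M i j = 0) ∧
        ∃ x : κ → F, x ≠ 0 ∧ M *ᵥ x = 0 ∧ ({j | x j ≠ 0}.ncard : ℝ) ≤ w}
  set X : Finset (κ → F) := {x | x ≠ 0 ∧ ({j | x j ≠ 0}.ncard : ℝ) ≤ w}
  set K : (κ → F) → Set (Matrix ι κ F) :=
    fun x => {M | (∀ i j, H i j = false → M i j = 0) ∧ M *ᵥ x = 0}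
  have hq : (0 : ℝ) < Nat.card F := by exact_mod_cast Nat.card_pos
  have hE : {q : ι × κ | H q.1 q.2 = true}.ncard = #(tannerEdges H) := by
    rw [← Set.ncard_coe_finset]; simp [tannerEdges]
  have hunion : Bad.ncard ≤ ∑ x ∈ X, (K x).ncard := by
    refine (Set.ncard_le_ncard ?_ (Set.toFinite _)).trans (X.set_ncard_biUnion_le K)
    rintro M ⟨hM, x, hx0, hMx, hxw⟩
    exact Set.mem_biUnion (x := x) (by simp [X, hx0, hxw]) ⟨hM, hMx⟩
  have hker : ∀ x, ((K x).ncard : ℝ) / (Nat.card F : ℝ) ^ #(tannerEdges H)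
      ≤ 1 / (Nat.card F : ℝ) ^ #(tannerNbhd H {j | x j ≠ 0}) := by
    intro x
    rw [div_le_div_iff₀ (by positivity) (by positivity), one_mul]
    exact_mod_cast ncard_mulVec_eq_zero_mul_pow_le H x
  calc _ ≤ (∑ x ∈ X, ((K x).ncard : ℝ)) / (Nat.card F : ℝ) ^ #(tannerEdges H) := by
        rw [hE]; gcongr; exact_mod_cast hunion
    _ ≤ ∑ x ∈ X, 1 / (Nat.card F : ℝ) ^ #(tannerNbhd H {j | x j ≠ 0}) := by
        rw [sum_div]; exact sum_le_sum fun x _ => hker x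
    _ ≤ _ := sum_one_div_pow_card_tannerNbhd_le H w

end UnionBound

lemma pow_div_pow_le_rpow {q : ℝ} (hq : 1 ≤ q) {a b : ℕ} {e : ℝ} (h : (a : ℝ) - b ≤ e) :
    q ^ a / q ^ b ≤ q ^ e := by
  rw [← Real.rpow_natCast, ← Real.rpow_natCast, ← Real.rpow_sub (by linarith)]
  exact Real.rpow_le_rpow_of_exponent_le hq h

lemma sum_nonempty_pow_card_le (α : Type*) [Fintype α] [DecidableEq α] {r : ℝ} (hr : 0 ≤ r)
    (h : Fintype.card α * r ≤ 1) :
    ∑ S : Finset α with S.Nonempty, r ^ #S ≤ 2 * (Fintype.card α * r) := by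
  have hsum : ∑ S : Finset α with S.Nonempty, r ^ #S + 1 = (r + 1) ^ Fintype.card α := by
    have := sum_filter_add_sum_filter_not univ Finset.Nonempty fun S : Finset α => r ^ #S
    simp only [not_nonempty_iff_eq_empty, filter_eq', mem_univ, if_true, sum_singleton,
      card_empty, pow_zero] at this
    simpa [this] using Fintype.sum_pow_mul_eq_add_pow α r 1
  have hexp : (r + 1) ^ Fintype.card α ≤ Real.exp (Fintype.card α * r) := by
    rw [Real.exp_nat_mul]
    exact pow_le_pow_left₀ (by linarith) (Real.add_one_le_exp r) _
  have hnr : 0 ≤ Fintype.card α * r := by positivity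
  have hexp_sub : Real.exp (Fintype.card α * r) - 1 ≤ 2 * (Fintype.card α * r) := by
    have := Real.abs_exp_sub_one_le (x := Fintype.card α * r) (by rwa [abs_of_nonneg hnr])
    rw [abs_of_nonneg hnr] at this
    exact (le_abs_self _).trans this
  linarith

section Expansion

variable {ι κ : Type*} [Fintype ι] [DecidableEq ι] (H : Matrix ι κ Bool) {c t : ℝ}

lemma le_card_tannerNbhd_of_lt (hc : 0 ≤ c) (ht : 0 ≤ t)
    (hexp : ∀ S : Finset κ, (#S : ℝ) ≤ t → c * #S ≤ #(tannerNbhd H S))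
    {S : Finset κ} (hS : t < #S) : c * (t - 1) ≤ #(tannerNbhd H S) := by
  have hfloor : ⌊t⌋₊ ≤ #S := by exact_mod_cast (Nat.floor_le ht).trans hS.le
  obtain ⟨S', hS'S, hS'⟩ := exists_subset_card_eq hfloor
  calc c * (t - 1) ≤ c * #S' := by
        rw [hS']; exact mul_le_mul_of_nonneg_left (Nat.sub_one_lt_floor t).le hc
    _ ≤ #(tannerNbhd H S') := hexp S' (by rw [hS']; exact Nat.floor_le ht)
    _ ≤ #(tannerNbhd H S) := by exact_mod_cast card_le_card (tannerNbhd_mono H hS'S)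

variable [Fintype κ] [DecidableEq κ]

lemma sum_lowWeightSupports_le {q w : ℝ} (hq : 1 ≤ q) (hc : 0 ≤ c) (ht : 0 ≤ t)
    (hexp : ∀ S : Finset κ, (#S : ℝ) ≤ t → c * #S ≤ #(tannerNbhd H S))
    (hsmall : Fintype.card κ * q ^ (1 - c) ≤ 1) :
    ∑ S ∈ lowWeightSupports κ w, q ^ #S / q ^ #(tannerNbhd H S)
      ≤ 2 * (Fintype.card κ * q ^ (1 - c)) + 2 ^ Fintype.card κ * q ^ (w - c * (t - 1)) := by
  rw [← sum_filter_add_sum_filter_not _ fun S => (#S : ℝ) ≤ t]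
  gcongr ?_ + ?_
  · calc _ ≤ ∑ S ∈ lowWeightSupports κ w with (#S : ℝ) ≤ t, (q ^ (1 - c)) ^ #S := by
          refine sum_le_sum fun S hS => ?_
          rw [← Real.rpow_natCast (q ^ (1 - c)), ← Real.rpow_mul (by linarith)]
          refine pow_div_pow_le_rpow hq ?_
          nlinarith [hexp S (mem_filter.1 hS).2]
      _ ≤ ∑ S : Finset κ with S.Nonempty, (q ^ (1 - c)) ^ #S := by
          refine sum_le_sum_of_subset_of_nonneg (fun S hS => ?_) fun _ _ _ => by positivity
          exact mem_filter.2 ⟨mem_univ S, (mem_filter.1 (mem_filter.1 hS).1).2.1⟩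
      _ ≤ _ := sum_nonempty_pow_card_le κ (by positivity) hsmall
  · calc _ ≤ ∑ S ∈ lowWeightSupports κ w with ¬(#S : ℝ) ≤ t, q ^ (w - c * (t - 1)) := by
          refine sum_le_sum fun S hS => pow_div_pow_le_rpow hq ?_
          obtain ⟨hSw, hSt⟩ := mem_filter.1 hS
          have := le_card_tannerNbhd_of_lt H hc ht hexp (not_le.1 hSt)
          linarith [(mem_filter.1 hSw).2.2]
      _ ≤ _ := by
          rw [sum_const, nsmul_eq_mul]
          gcongr
          exact_mod_cast (card_le_univ _).trans (Fintype.card_finset (α := κ)).le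

end Expansion

section Asymptotics

variable {p : ℕ → ℝ} {lam : ℝ}

lemma tendsto_natCast_mul_rpow_neg (hp : ∀ n, 0 ≤ p n)
    (hpn : Tendsto (fun n : ℕ => p n / (n : ℝ) ^ lam) atTop (𝓝 1)) {β : ℝ} (h : 1 < lam * β) :
    Tendsto (fun n : ℕ => (n : ℝ) * p n ^ (-β)) atTop (𝓝 0) := by
  have hratio : Tendsto (fun n : ℕ => (p n / (n : ℝ) ^ lam) ^ (-β)) atTop (𝓝 1) := by
    simpa using hpn.rpow_const (Or.inl one_ne_zero)
  have hpow : Tendsto (fun n : ℕ => (n : ℝ) ^ (1 - lam * β)) atTop (𝓝 0) := by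
    have := (tendsto_rpow_neg_atTop (by linarith : 0 < lam * β - 1)).comp
      tendsto_natCast_atTop_atTop
    simpa [Function.comp_def] using this
  refine (by simpa using hratio.mul hpow :
      Tendsto (fun n : ℕ => (p n / (n : ℝ) ^ lam) ^ (-β) * (n : ℝ) ^ (1 - lam * β)) atTop
        (𝓝 0)).congr' ?_
  filter_upwards [eventually_gt_atTop 0] with n hn
  have hn : (0 : ℝ) < n := by exact_mod_cast hn
  rw [Real.div_rpow (hp n) (by positivity), ← Real.rpow_mul hn.le, div_mul_eq_mul_div,
    mul_div_assoc, ← Real.rpow_sub hn, show 1 - lam * β - lam * -β = 1 by ring, Real.rpow_one,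
    mul_comm]

lemma tendsto_atTop_of_tendsto_div_rpow
    (hpn : Tendsto (fun n : ℕ => p n / (n : ℝ) ^ lam) atTop (𝓝 1)) (hlam : 0 < lam) :
    Tendsto p atTop atTop := by
  refine (hpn.pos_mul_atTop one_pos
    ((tendsto_rpow_atTop hlam).comp tendsto_natCast_atTop_atTop)).congr' ?_
  filter_upwards [eventually_gt_atTop 0] with n hn
  have : (0 : ℝ) < (n : ℝ) ^ lam := by positivity
  simp [div_mul_cancel₀ _ this.ne']

lemma tendsto_two_pow_mul_rpow_sub (hp : Tendsto p atTop atTop) (a : ℝ) {γ : ℝ} (hγ : 0 < γ) :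
    Tendsto (fun n : ℕ => 2 ^ n * p n ^ (a - γ * n)) atTop (𝓝 0) := by
  have htwo : ∀ᶠ n in atTop, 2 ≤ p n ^ (γ / 2) := by
    filter_upwards [hp.eventually_ge_atTop ((2 : ℝ) ^ (2 / γ))] with n hn
    calc (2 : ℝ) = ((2 : ℝ) ^ (2 / γ)) ^ (γ / 2) := by
          rw [← Real.rpow_mul zero_le_two, div_mul_div_cancel₀ hγ.ne', div_self two_ne_zero,
            Real.rpow_one]
      _ ≤ p n ^ (γ / 2) := Real.rpow_le_rpow (by positivity) hn (by positivity)
  have hlarge : ∀ᶠ n : ℕ in atTop, a + 1 ≤ γ / 2 * n :=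
    (tendsto_natCast_atTop_atTop.const_mul_atTop (half_pos hγ)).eventually_ge_atTop _
  refine squeeze_zero' ?_ ?_ hp.inv_tendsto_atTop
  · filter_upwards [hp.eventually_ge_atTop 0] with n hn
    positivity
  filter_upwards [htwo, hlarge, hp.eventually_ge_atTop 1] with n htwo hlarge hp1
  calc 2 ^ n * p n ^ (a - γ * n) ≤ (p n ^ (γ / 2)) ^ n * p n ^ (a - γ * n) := by gcongr
    _ = p n ^ (a - γ / 2 * n) := by
        rw [← Real.rpow_natCast, ← Real.rpow_mul (by linarith), ← Real.rpow_add (by linarith)]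
        ring_nf
    _ ≤ p n ^ (-1 : ℝ) := Real.rpow_le_rpow_of_exponent_le hp1 (by linarith)
    _ = (p n)⁻¹ := Real.rpow_neg_one _

end Asymptotics

/-- **Asymptotic goodness of non-binary LDPC codes.**  Fix a rational `R_f ∈ (0,1)`,
`D > 1/(1−R_f)`, `λ > 1/(D(1−R_f)−1)` and `δ < D(1−R_f)/(D+1)`.  Let `p(n)` be primes with
`p(n)/n^λ → 1`, restrict to `n` with `n(1−R_f) ∈ ℕ` (i.e. `m n = n(1−R_f)`), and for each
such `n` let `H(n)` be a binary skeleton matrix whose Tanner graph satisfies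
`|N(S)| ≥ D(1−R_f)|S|` for every set `S` of columns with `|S| ≤ n/(D+1)`.  Let `ℍ(n)` be the
associated random matrix over `𝔽_{p(n)}` (independent uniform entries where `H(n)` has a 1,
zero elsewhere — so the sample space is the set of compatible matrices, of cardinality
`p^{#ones}`), and let `C_f = ker ℍ(n)`.  Then the probability that `C_f` contains a nonzero
codeword of Hamming weight at most `δn` tends to `0`. -/
theorem ldpc_min_distance
    (Rf : ℚ) (hRf : 0 < Rf ∧ Rf < 1) (D lam δ : ℝ)
    (hD : 1 / (1 - (Rf : ℝ)) < D) (hlam : 1 / (D * (1 - (Rf : ℝ)) - 1) < lam)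
    (hδ : δ < D * (1 - (Rf : ℝ)) / (D + 1))
    (p : ℕ → ℕ) (hp : ∀ n, (p n).Prime)
    (hpn : Tendsto (fun n : ℕ => (p n : ℝ) / (n : ℝ) ^ lam) atTop (nhds 1))
    (m : ℕ → ℕ)
    (H : (n : ℕ) → Matrix (Fin (m n)) (Fin n) Bool)
    (hexp : ∀ n : ℕ, (m n : ℚ) = (n : ℚ) * (1 - Rf) →
      ∀ S : Set (Fin n), (S.ncard : ℝ) ≤ (n : ℝ) / (D + 1) →
        D * (1 - (Rf : ℝ)) * (S.ncard : ℝ) ≤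
          (Set.ncard {i : Fin (m n) | ∃ j ∈ S, H n i j = true} : ℝ)) :
    Tendsto
      (fun n : ℕ =>
        (Set.ncard {M : Matrix (Fin (m n)) (Fin n) (ZMod (p n)) |
            (∀ i j, H n i j = false → M i j = 0) ∧
            ∃ x : Fin n → ZMod (p n), x ≠ 0 ∧ M.mulVec x = 0 ∧
              (Set.ncard {j | x j ≠ 0} : ℝ) ≤ δ * n} : ℝ)
          / (p n : ℝ) ^ (Set.ncard {q : Fin (m n) × Fin n | H n q.1 q.2 = true}))
      (atTop ⊓ Filter.principal {n : ℕ | (m n : ℚ) = (n : ℚ) * (1 - Rf)}) (nhds 0) := by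
  set c := D * (1 - (Rf : ℝ))
  have hR : (0 : ℝ) < 1 - Rf := sub_pos.2 (by exact_mod_cast hRf.2)
  have hc : 1 < c := by rwa [div_lt_iff₀ hR] at hD
  have hD1 : 0 < D + 1 := by nlinarith
  have hlam0 : 0 < lam := lt_trans (by simpa using hc) hlam
  have hγ : 0 < c / (D + 1) - δ := by linarith
  have hsmall := tendsto_natCast_mul_rpow_neg (fun n => (p n).cast_nonneg) hpn (β := c - 1)
    (by rwa [div_lt_iff₀ (by linarith)] at hlam)
  have hlarge := tendsto_two_pow_mul_rpow_sub
    (tendsto_atTop_of_tendsto_div_rpow hpn hlam0) c hγ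
  have hbound : Tendsto (fun n : ℕ => 2 * (n * (p n : ℝ) ^ (-(c - 1)))
      + 2 ^ n * (p n : ℝ) ^ (c - (c / (D + 1) - δ) * n)) atTop (𝓝 0) := by
    simpa using (hsmall.const_mul 2).add hlarge
  refine squeeze_zero' (Eventually.of_forall fun n => by positivity) ?_
    (hbound.mono_left inf_le_left)
  rw [eventually_inf_principal]
  filter_upwards [hsmall.eventually (ge_mem_nhds one_pos)] with n hn hm
  have : Fact (p n).Prime := ⟨hp n⟩
  have hexpn : ∀ S : Finset (Fin n), (#S : ℝ) ≤ n / (D + 1) → c * #S ≤ #(tannerNbhd (H n) S) :=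
    fun S hS => by
      simpa only [← Set.ncard_coe_finset, coe_tannerNbhd] using hexp n hm S (by simpa using hS)
  calc _ ≤ ∑ S ∈ lowWeightSupports (Fin n) (δ * n),
          (p n : ℝ) ^ #S / (p n : ℝ) ^ #(tannerNbhd (H n) S) := by
        simpa using ncard_lowWeight_div_le (F := ZMod (p n)) (H n) (δ * n)
    _ ≤ 2 * (n * (p n : ℝ) ^ (1 - c)) + 2 ^ n * (p n : ℝ) ^ (δ * n - c * (n / (D + 1) - 1)) := by
        simpa using sum_lowWeightSupports_le (H n) (by exact_mod_cast (hp n).one_le)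
          (by linarith) (by positivity) hexpn (by simpa [neg_sub] using hn)
    _ = _ := by ring_nf
end

section
/- Let n ≥ 2, let m be an integer with 0 ≤ m ≤ n/2, let ρ > √n/2, and let c ∈ ℝⁿ, c' ∈ ℝ^{n−m}. Then #(ℤ^{n−m} ∩ B_{c',n−m}(ρ)) · vol(B_{0,n}(ρ − √n/2)) ≤ #(ℤⁿ ∩ B_{c,n}(ρ)) · vol(B_{0,n−m}(ρ + √(n−m)/2)). -/
open MeasureTheory
open scoped ENNReal

namespace IntPtsAux

lemma tri {k : ℕ} (a b : Fin k → ℝ) :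
    Real.sqrt (∑ i, (a i + b i) ^ 2) ≤
      Real.sqrt (∑ i, a i ^ 2) + Real.sqrt (∑ i, b i ^ 2) := by
  have h := norm_add_le ((WithLp.equiv 2 (Fin k → ℝ)).symm a)
    ((WithLp.equiv 2 (Fin k → ℝ)).symm b)
  simpa [EuclideanSpace.norm_eq, sq_abs] using h

lemma translate {k : ℕ} (c : Fin k → ℝ) (r : ℝ) :
    volume {y : Fin k → ℝ | Real.sqrt (∑ i, (y i - c i) ^ 2) ≤ r}
      = volume {y : Fin k → ℝ | Real.sqrt (∑ i, y i ^ 2) ≤ r} := by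
  have : {y : Fin k → ℝ | Real.sqrt (∑ i, (y i - c i) ^ 2) ≤ r}
      = (fun y => y + (-c)) ⁻¹' {y : Fin k → ℝ | Real.sqrt (∑ i, y i ^ 2) ≤ r} := by
    ext y; simp [Set.mem_preimage, sub_eq_add_neg]
  rw [this]
  exact measure_preimage_add_right volume (-c) _

lemma coord_bound {k : ℕ} {c : Fin k → ℝ} {r : ℝ} {x : Fin k → ℤ}
    (hx : Real.sqrt (∑ i, ((x i : ℝ) - c i) ^ 2) ≤ r) (i : Fin k) :
    |(x i : ℝ) - c i| ≤ r := by
  have h1 : ((x i : ℝ) - c i) ^ 2 ≤ ∑ j, ((x j : ℝ) - c j) ^ 2 :=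
    Finset.single_le_sum (f := fun j => ((x j : ℝ) - c j) ^ 2)
      (fun j _ => sq_nonneg _) (Finset.mem_univ i)
  calc |(x i : ℝ) - c i| = Real.sqrt (((x i : ℝ) - c i) ^ 2) := (Real.sqrt_sq_eq_abs _).symm
    _ ≤ Real.sqrt (∑ j, ((x j : ℝ) - c j) ^ 2) := Real.sqrt_le_sqrt h1
    _ ≤ r := hx

lemma finite_lattice {k : ℕ} (c : Fin k → ℝ) (r : ℝ) :
    {x : Fin k → ℤ | Real.sqrt (∑ i, ((x i : ℝ) - c i) ^ 2) ≤ r}.Finite := by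
  apply Set.Finite.subset (Set.Finite.pi (fun i => Set.finite_Icc ⌈c i - r⌉ ⌊c i + r⌋))
  intro x hx
  simp only [Set.mem_pi, Set.mem_univ, true_implies, Set.mem_Icc]
  intro i
  have h := abs_le.mp (coord_bound hx i)
  constructor
  · exact Int.ceil_le.mpr (by linarith [h.1])
  · exact Int.le_floor.mpr (by linarith [h.2])

def cube {k : ℕ} (x : Fin k → ℤ) : Set (Fin k → ℝ) :=
  Set.pi Set.univ fun i => Set.Ico ((x i : ℝ) - 1/2) ((x i : ℝ) + 1/2)

lemma cube_measurable {k : ℕ} (x : Fin k → ℤ) : MeasurableSet (cube x) :=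
  MeasurableSet.univ_pi fun _ => measurableSet_Ico

lemma cube_volume {k : ℕ} (x : Fin k → ℤ) : volume (cube x) = 1 := by
  rw [cube, volume_pi_pi]
  simp [Real.volume_Ico]
  norm_num

lemma mem_cube_rnd {k : ℕ} (y : Fin k → ℝ) :
    y ∈ cube (fun i => ⌊y i + 1/2⌋) := by
  intro i _
  constructor
  · have := Int.floor_le (y i + 1/2); dsimp only; linarith
  · have := Int.lt_floor_add_one (y i + 1/2); dsimp only; linarith

lemma eq_rnd_of_mem_cube {k : ℕ} {y : Fin k → ℝ} {x : Fin k → ℤ} (h : y ∈ cube x) :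
    x = fun i => ⌊y i + 1/2⌋ := by
  funext i
  have h1 := h i (Set.mem_univ i)
  obtain ⟨ha, hb⟩ := h1
  symm
  rw [Int.floor_eq_iff]
  constructor
  · push_cast; linarith
  · push_cast; linarith

lemma dist_to_rnd {k : ℕ} {y : Fin k → ℝ} {x : Fin k → ℤ} (h : y ∈ cube x) :
    Real.sqrt (∑ i, (y i - (x i : ℝ)) ^ 2) ≤ Real.sqrt k / 2 := by
  have hb : ∀ i, (y i - (x i : ℝ)) ^ 2 ≤ 1/4 := by
    intro i
    have h1 := h i (Set.mem_univ i)
    simp only [Set.mem_Ico] at h1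
    have := abs_le.mpr (⟨by linarith [h1.1], by linarith [h1.2.le]⟩ :
      -(1/2) ≤ y i - (x i : ℝ) ∧ y i - (x i : ℝ) ≤ 1/2)
    calc (y i - (x i : ℝ)) ^ 2 = |y i - (x i : ℝ)| ^ 2 := (sq_abs _).symm
      _ ≤ (1/2) ^ 2 := by
          apply pow_le_pow_left₀ (abs_nonneg _)
          exact this
      _ = 1/4 := by norm_num
  calc Real.sqrt (∑ i, (y i - (x i : ℝ)) ^ 2) ≤ Real.sqrt (k * (1/4)) := by
        apply Real.sqrt_le_sqrt
        calc (∑ i, (y i - (x i : ℝ)) ^ 2) ≤ ∑ _i : Fin k, (1/4 : ℝ) :=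
              Finset.sum_le_sum fun i _ => hb i
          _ = k * (1/4) := by simp [Finset.sum_const]
    _ = Real.sqrt k / 2 := by
        rw [show (k : ℝ) * (1/4) = k / 2^2 by ring,
          Real.sqrt_div (by positivity), Real.sqrt_sq (by norm_num)]

end IntPtsAux

namespace IntPtsAux

lemma volume_le_card {k : ℕ} (c : Fin k → ℝ) (r : ℝ) :
    volume {y : Fin k → ℝ | Real.sqrt (∑ i, y i ^ 2) ≤ r - Real.sqrt k / 2}
      ≤ (Set.ncard {x : Fin k → ℤ |
          Real.sqrt (∑ i, ((x i : ℝ) - c i) ^ 2) ≤ r} : ℝ≥0∞) := by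
  set S := {x : Fin k → ℤ | Real.sqrt (∑ i, ((x i : ℝ) - c i) ^ 2) ≤ r} with hSdef
  have hS : S.Finite := finite_lattice c r
  rw [← translate c]
  have hsub : {y : Fin k → ℝ | Real.sqrt (∑ i, (y i - c i) ^ 2) ≤ r - Real.sqrt k / 2}
      ⊆ ⋃ x ∈ hS.toFinset, cube x := by
    intro y hy
    simp only [Set.mem_setOf_eq] at hy
    refine Set.mem_biUnion (hS.mem_toFinset.mpr ?_) (mem_cube_rnd y)
    show Real.sqrt (∑ i, ((⌊y i + 1/2⌋ : ℝ) - c i) ^ 2) ≤ r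
    have hd : Real.sqrt (∑ i, ((⌊y i + 1/2⌋ : ℝ) - y i) ^ 2) ≤ Real.sqrt k / 2 := by
      have := dist_to_rnd (mem_cube_rnd y)
      calc Real.sqrt (∑ i, ((⌊y i + 1/2⌋ : ℝ) - y i) ^ 2)
          = Real.sqrt (∑ i, (y i - (⌊y i + 1/2⌋ : ℝ)) ^ 2) := by
            congr 1; exact Finset.sum_congr rfl fun i _ => by ring
        _ ≤ Real.sqrt k / 2 := this
    calc Real.sqrt (∑ i, ((⌊y i + 1/2⌋ : ℝ) - c i) ^ 2)
        = Real.sqrt (∑ i, (((⌊y i + 1/2⌋ : ℝ) - y i) + (y i - c i)) ^ 2) := by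
          congr 1; exact Finset.sum_congr rfl fun i _ => by ring_nf
      _ ≤ Real.sqrt (∑ i, ((⌊y i + 1/2⌋ : ℝ) - y i) ^ 2)
            + Real.sqrt (∑ i, (y i - c i) ^ 2) := tri _ _
      _ ≤ Real.sqrt k / 2 + (r - Real.sqrt k / 2) := add_le_add hd hy
      _ = r := by ring
  calc volume {y : Fin k → ℝ | Real.sqrt (∑ i, (y i - c i) ^ 2) ≤ r - Real.sqrt k / 2}
      ≤ volume (⋃ x ∈ hS.toFinset, cube x) := measure_mono hsub
    _ ≤ ∑ x ∈ hS.toFinset, volume (cube x) := measure_biUnion_finset_le _ _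
    _ = (S.ncard : ℝ≥0∞) := by
        simp [cube_volume, Set.ncard_eq_toFinset_card S hS]

lemma card_le_volume {k : ℕ} (c : Fin k → ℝ) (r : ℝ) :
    (Set.ncard {x : Fin k → ℤ |
        Real.sqrt (∑ i, ((x i : ℝ) - c i) ^ 2) ≤ r} : ℝ≥0∞)
      ≤ volume {y : Fin k → ℝ | Real.sqrt (∑ i, y i ^ 2) ≤ r + Real.sqrt k / 2} := by
  set S := {x : Fin k → ℤ | Real.sqrt (∑ i, ((x i : ℝ) - c i) ^ 2) ≤ r} with hSdef
  have hS : S.Finite := finite_lattice c r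
  rw [← translate c]
  have hdisj : (hS.toFinset : Set (Fin k → ℤ)).PairwiseDisjoint cube := by
    intro x hx x' hx' hne
    refine Set.disjoint_left.mpr fun y hy hy' => hne ?_
    rw [eq_rnd_of_mem_cube hy, eq_rnd_of_mem_cube hy']
  have hsub : (⋃ x ∈ hS.toFinset, cube x)
      ⊆ {y : Fin k → ℝ | Real.sqrt (∑ i, (y i - c i) ^ 2) ≤ r + Real.sqrt k / 2} := by
    intro y hy
    simp only [Set.mem_iUnion, exists_prop] at hy
    obtain ⟨x, hx, hyx⟩ := hy
    rw [Set.Finite.mem_toFinset] at hx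
    have hx' : Real.sqrt (∑ i, ((x i : ℝ) - c i) ^ 2) ≤ r := hx
    show Real.sqrt (∑ i, (y i - c i) ^ 2) ≤ r + Real.sqrt k / 2
    calc Real.sqrt (∑ i, (y i - c i) ^ 2)
        = Real.sqrt (∑ i, ((y i - (x i : ℝ)) + ((x i : ℝ) - c i)) ^ 2) := by
          congr 1; exact Finset.sum_congr rfl fun i _ => by ring_nf
      _ ≤ Real.sqrt (∑ i, (y i - (x i : ℝ)) ^ 2)
            + Real.sqrt (∑ i, ((x i : ℝ) - c i) ^ 2) := tri _ _
      _ ≤ Real.sqrt k / 2 + r := add_le_add (dist_to_rnd hyx) hx'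
      _ = r + Real.sqrt k / 2 := by ring
  calc (S.ncard : ℝ≥0∞) = ∑ x ∈ hS.toFinset, volume (cube x) := by
        simp [cube_volume, Set.ncard_eq_toFinset_card S hS]
    _ = volume (⋃ x ∈ hS.toFinset, cube x) :=
        (measure_biUnion_finset hdisj fun x _ => cube_measurable x).symm
    _ ≤ _ := measure_mono hsub

end IntPtsAux

/-- **Comparison of integer-point counts of balls in different dimensions.**  Let `n ≥ 2`,
`0 ≤ m ≤ n/2`, `ρ > √n/2`, `c ∈ ℝⁿ` and `c' ∈ ℝ^{n−m}`.  Then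
`#(ℤ^{n−m} ∩ B_{c',n−m}(ρ)) · vol(B_{0,n}(ρ − √n/2))
  ≤ #(ℤⁿ ∩ B_{c,n}(ρ)) · vol(B_{0,n−m}(ρ + √(n−m)/2))`. -/
theorem integer_points_dimension_ratio (n m : ℕ) (hn : 2 ≤ n) (hm : 2 * m ≤ n)
    (ρ : ℝ) (hρ : Real.sqrt n / 2 < ρ) (c : Fin n → ℝ) (c' : Fin (n - m) → ℝ) :
    (Set.ncard {x : Fin (n - m) → ℤ |
        Real.sqrt (∑ i, ((x i : ℝ) - c' i) ^ 2) ≤ ρ} : ℝ≥0∞) *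
        volume {y : Fin n → ℝ | Real.sqrt (∑ i, y i ^ 2) ≤ ρ - Real.sqrt n / 2}
      ≤ (Set.ncard {x : Fin n → ℤ |
          Real.sqrt (∑ i, ((x i : ℝ) - c i) ^ 2) ≤ ρ} : ℝ≥0∞) *
        volume {y : Fin (n - m) → ℝ |
          Real.sqrt (∑ i, y i ^ 2) ≤ ρ + Real.sqrt ((n - m : ℕ) : ℝ) / 2} := by
  calc _ ≤ volume {y : Fin (n - m) → ℝ |
          Real.sqrt (∑ i, y i ^ 2) ≤ ρ + Real.sqrt ((n - m : ℕ) : ℝ) / 2} *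
        (Set.ncard {x : Fin n → ℤ |
          Real.sqrt (∑ i, ((x i : ℝ) - c i) ^ 2) ≤ ρ} : ℝ≥0∞) :=
      mul_le_mul' (IntPtsAux.card_le_volume c' ρ) (IntPtsAux.volume_le_card c ρ)
    _ = _ := mul_comm _ _
end

section
/- Let n ≥ 1, let P, σ, ε', f > 0, let x, w ∈ ℝⁿ, set y = x + w and α = P/(P + σ²). If ‖x‖² ≤ nP(1+ε')², ‖w‖² ≤ nσ²(1+ε')², and |⟨x, w⟩| ≤ f·σ·‖x‖, then ‖αy − x‖² ≤ (nPσ²/(P+σ²)) · ( (1+ε')² + 2fσ√P(1+ε')/(√n·(P+σ²)) ). -/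
/-!
Since `α • y - x = α • w - (1 - α) • x`, the squared error is
`(1 - α)² ‖x‖² + α² ‖w‖² - 2 α (1 - α) ⟪x, w⟫`. Bounding the three terms by the hypotheses,
the first two add up to `n (1 + ε')²` times the scalar MMSE `P σ² / (P + σ²)`, and the cross
term gives the correction of order `1 / √n`.
-/

open Real
open scoped InnerProductSpace

section

variable {E : Type*} [NormedAddCommGroup E] [InnerProductSpace ℝ E]

theorem norm_smul_add_sub_sq (α : ℝ) (x w : E) :
    ‖α • (x + w) - x‖ ^ 2
      = (1 - α) ^ 2 * ‖x‖ ^ 2 + α ^ 2 * ‖w‖ ^ 2 - 2 * (α * (1 - α)) * ⟪x, w⟫_ℝ := by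
  have h : α • (x + w) - x = α • w - (1 - α) • x := by module
  rw [h, norm_sub_sq_real, norm_smul, norm_smul, inner_smul_left, inner_smul_right,
    real_inner_comm, Real.norm_eq_abs, Real.norm_eq_abs, mul_pow, mul_pow, sq_abs, sq_abs]
  simp only [conj_trivial]
  ring

theorem norm_smul_add_sub_sq_le {α A B c : ℝ} (hα₀ : 0 ≤ α) (hα₁ : α ≤ 1) {x w : E}
    (hx : ‖x‖ ^ 2 ≤ A) (hw : ‖w‖ ^ 2 ≤ B) (hxw : |⟪x, w⟫_ℝ| ≤ c) :
    ‖α • (x + w) - x‖ ^ 2 ≤ (1 - α) ^ 2 * A + α ^ 2 * B + 2 * (α * (1 - α)) * c := by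
  rw [norm_smul_add_sub_sq, sub_eq_add_neg, ← mul_neg]
  have hcross : -⟪x, w⟫_ℝ ≤ c := (neg_le_abs _).trans hxw
  have : 0 ≤ 1 - α := sub_nonneg.2 hα₁
  gcongr

end

theorem one_sub_div_add_self {P N : ℝ} (h : P + N ≠ 0) : 1 - P / (P + N) = N / (P + N) := by
  rw [one_sub_div h, add_sub_cancel_left]

theorem wiener_error_eq {P N : ℝ} (h : P + N ≠ 0) :
    (N / (P + N)) ^ 2 * P + (P / (P + N)) ^ 2 * N = P * N / (P + N) := by
  field_simp
  ring

theorem mmse_effective_noise_bound_general (n : ℕ) (P σ ε' f : ℝ)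
    (hP : 0 < P) (hσ : 0 < σ) (hε : 0 < ε') (hf : 0 < f) (x w : Fin n → ℝ)
    (hx : ∑ i, x i ^ 2 ≤ n * P * (1 + ε') ^ 2)
    (hw : ∑ i, w i ^ 2 ≤ n * σ ^ 2 * (1 + ε') ^ 2)
    (hxw : |∑ i, x i * w i| ≤ f * σ * Real.sqrt (∑ i, x i ^ 2)) :
    ∑ i, ((P / (P + σ ^ 2)) * (x i + w i) - x i) ^ 2
      ≤ (n * P * σ ^ 2 / (P + σ ^ 2)) *
          ((1 + ε') ^ 2 + 2 * f * σ * Real.sqrt P * (1 + ε') / (Real.sqrt n * (P + σ ^ 2))) := by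
  let X : EuclideanSpace ℝ (Fin n) := WithLp.toLp 2 x
  let W : EuclideanSpace ℝ (Fin n) := WithLp.toLp 2 w
  have hX : ‖X‖ ^ 2 = ∑ i, x i ^ 2 := EuclideanSpace.real_norm_sq_eq X
  have hW : ‖W‖ ^ 2 = ∑ i, w i ^ 2 := EuclideanSpace.real_norm_sq_eq W
  have hXW : |⟪X, W⟫_ℝ| ≤ f * σ * (√n * √P * (1 + ε')) := by
    have hinner : ⟪X, W⟫_ℝ = ∑ i, x i * w i := by
      simp [X, W, EuclideanSpace.inner_toLp_toLp, dotProduct, mul_comm]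
    have hnorm : ‖X‖ ≤ √n * √P * (1 + ε') := by
      rw [← sqrt_sq (norm_nonneg X), hX, ← sqrt_mul (by positivity),
        ← sqrt_sq (by positivity : 0 ≤ 1 + ε'), ← sqrt_mul (by positivity)]
      exact sqrt_le_sqrt hx
    rw [hinner]
    refine hxw.trans ?_
    rw [← hX, sqrt_sq (norm_nonneg X)]
    gcongr
  have hS : P + σ ^ 2 ≠ 0 := by positivity
  have hα₀ : 0 ≤ P / (P + σ ^ 2) := by positivity
  have hα₁ : P / (P + σ ^ 2) ≤ 1 :=
    div_le_one_of_le₀ (le_add_of_nonneg_right (sq_nonneg σ)) (by positivity)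
  have hsqrt : (n : ℝ) * (√n * (P + σ ^ 2))⁻¹ = √n / (P + σ ^ 2) := by
    rw [← div_eq_mul_inv, ← div_div, div_sqrt]
  have hE : ‖(P / (P + σ ^ 2)) • (X + W) - X‖ ^ 2
      = ∑ i, ((P / (P + σ ^ 2)) * (x i + w i) - x i) ^ 2 := by
    simp [EuclideanSpace.real_norm_sq_eq, X, W, mul_add]
  rw [← hE]
  refine (norm_smul_add_sub_sq_le hα₀ hα₁ (hX ▸ hx) (hW ▸ hw) hXW).trans_eq ?_
  rw [one_sub_div_add_self hS]
  linear_combination (n * (1 + ε') ^ 2) * wiener_error_eq hS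
    - (P * σ ^ 2 / (P + σ ^ 2) * (2 * f * σ * √P * (1 + ε'))) * hsqrt

/-- **Effective noise after MMSE scaling.**  Let `P, σ, ε', f > 0`, `x, w ∈ ℝⁿ`, `y = x + w`
and `α = P/(P+σ²)`.  If `‖x‖² ≤ nP(1+ε')²`, `‖w‖² ≤ nσ²(1+ε')²` and
`|⟨x,w⟩| ≤ f·σ·‖x‖`, then
`‖αy − x‖² ≤ (nPσ²/(P+σ²)) · ((1+ε')² + 2fσ√P(1+ε')/(√n·(P+σ²)))`. -/
theorem mmse_effective_noise_bound (n : ℕ) (hn : 1 ≤ n) (P σ ε' f : ℝ)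
    (hP : 0 < P) (hσ : 0 < σ) (hε : 0 < ε') (hf : 0 < f) (x w : Fin n → ℝ)
    (hx : ∑ i, x i ^ 2 ≤ n * P * (1 + ε') ^ 2)
    (hw : ∑ i, w i ^ 2 ≤ n * σ ^ 2 * (1 + ε') ^ 2)
    (hxw : |∑ i, x i * w i| ≤ f * σ * Real.sqrt (∑ i, x i ^ 2)) :
    ∑ i, ((P / (P + σ ^ 2)) * (x i + w i) - x i) ^ 2
      ≤ (n * P * σ ^ 2 / (P + σ ^ 2)) *
          ((1 + ε') ^ 2 + 2 * f * σ * Real.sqrt P * (1 + ε') / (Real.sqrt n * (P + σ ^ 2))) :=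
  mmse_effective_noise_bound_general n P σ ε' f hP hσ hε hf x w hx hw hxw
end
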